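/- arXiv:1503.05302 — 4 statements merged into one kernel-verified Lean document; each statement's English description precedes it below -/
import Mathlib

section
/- Let d ≥ 2 and 0 < β < α < 2 with α > 2β, and let D ⊂ ℝ^d be a bounded open set. Then there exists a constant C = C(d, α, β) > 0 such that for all pairwise distinct x, y, z ∈ D: g_D(x,z)·h_D(z,y) ≤ C·diam(D)^{α/2−β}·( |x−z|^{−(d−α/2)} + |y−z|^{−(d−α/2)} )·g_D(x,y). -/
open MeasureTheory Metric Set

noncomputable section

/-- distance to the boundary `∂D` -/
def deltaD {d : ℕ} (D : Set (EuclideanSpace ℝ (Fin d))) (x : EuclideanSpace ℝ (Fin d)) : ℝ :=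
  Metric.infDist x (frontier D)

/-- the kernel `g_D(x,y)`, comparable to the Green function of the killed
symmetric `α`-stable process in `D` -/
def gKer {d : ℕ} (α : ℝ) (D : Set (EuclideanSpace ℝ (Fin d)))
    (x y : EuclideanSpace ℝ (Fin d)) : ℝ :=
  ‖x - y‖ ^ (α - (d : ℝ)) * min 1 (deltaD D x / ‖x - y‖) ^ (α / 2)
    * min 1 (deltaD D y / ‖x - y‖) ^ (α / 2)

/-- the kernel `h_D(x,y)` -/
def hKer {d : ℕ} (α β : ℝ) (D : Set (EuclideanSpace ℝ (Fin d)))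
    (x y : EuclideanSpace ℝ (Fin d)) : ℝ :=
  if 2 * β < α then
    ‖x - y‖ ^ (α - β - (d : ℝ)) * min 1 (deltaD D y / ‖x - y‖) ^ (α / 2)
  else if α = 2 * β then
    ‖x - y‖ ^ (β - (d : ℝ)) * min 1 (deltaD D y / ‖x - y‖) ^ β
      * max 1 (Real.log (‖x - y‖ / deltaD D x))
  else
    ‖x - y‖ ^ (α - β - (d : ℝ)) * min 1 (deltaD D y / ‖x - y‖) ^ (α / 2)
      * max 1 (‖x - y‖ / deltaD D x) ^ (β - α / 2)

section Aux
open Real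

lemma min_ratio {δ a c k : ℝ} (ha : 0 < a) (hc : 0 < c) (hδ : 0 ≤ δ) (hk : 1 ≤ k)
    (hca : c ≤ k * a) : min 1 (δ / a) ≤ k * min 1 (δ / c) := by
  rcases le_total (δ / c) 1 with h | h
  · rw [min_eq_right h]
    calc min 1 (δ / a) ≤ δ / a := min_le_right _ _
      _ ≤ k * (δ / c) := by
          rw [mul_div_assoc', div_le_div_iff₀ ha hc]
          nlinarith [mul_le_mul_of_nonneg_left hca hδ]
  · rw [min_eq_left h, mul_one]
    exact le_trans (min_le_left _ _) hk

lemma min_prod {a b c dy dz : ℝ} (ha : 0 < a) (hb : 0 < b) (hc : 0 < c) (hdy : 0 ≤ dy)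
    (hB : 2 * b ≤ a) (hc2a : c ≤ 2 * a) (hzy : dz ≤ dy + b) :
    min 1 (dz / a) * min 1 (dy / b) ≤ 4 * min 1 (dy / c) := by
  have hq0 : 0 ≤ min 1 (dy / b) := le_min zero_le_one (by positivity)
  have hq1 : min 1 (dy / b) ≤ 1 := min_le_left _ _
  have hm1 : min 1 (dz / a) ≤ min 1 (dy / a) + b / a := by
    rcases le_total 1 (dy / a) with h | h
    · rw [min_eq_left h]
      have : (0:ℝ) ≤ b / a := by positivity
      calc min 1 (dz / a) ≤ 1 := min_le_left _ _
        _ ≤ 1 + b / a := by linarith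
    · rw [min_eq_right h]
      calc min 1 (dz / a) ≤ dz / a := min_le_right _ _
        _ ≤ dy / a + b / a := by rw [← add_div]; gcongr
  have t1 : min 1 (dy / a) ≤ 2 * min 1 (dy / c) := min_ratio ha hc hdy one_le_two hc2a
  have t2 : b / a * min 1 (dy / b) ≤ 2 * min 1 (dy / c) := by
    rcases le_total 1 (dy / b) with h | h
    · rw [min_eq_left h, mul_one]
      have hdyb : b ≤ dy := (one_le_div hb).mp h
      have h2 : b / (2 * a) ≤ min 1 (dy / c) := by
        refine le_min ?_ ?_
        · rw [div_le_one (by linarith)]; linarith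
        · calc b / (2 * a) ≤ dy / (2 * a) := by gcongr
            _ ≤ dy / c := by gcongr
      calc b / a = 2 * (b / (2 * a)) := by field_simp
        _ ≤ 2 * min 1 (dy / c) := by linarith
    · rw [min_eq_right h]
      have heq : b / a * (dy / b) = dy / a := by field_simp
      rw [heq]
      have h2 : dy / (2 * a) ≤ min 1 (dy / c) := by
        refine le_min ?_ ?_
        · rw [div_le_one (by linarith)]
          have : dy ≤ b := (div_le_one hb).mp h
          linarith
        · gcongr
      calc dy / a = 2 * (dy / (2 * a)) := by field_simp
        _ ≤ 2 * min 1 (dy / c) := by linarith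
  calc min 1 (dz / a) * min 1 (dy / b)
      ≤ (min 1 (dy / a) + b / a) * min 1 (dy / b) := mul_le_mul_of_nonneg_right hm1 hq0
    _ = min 1 (dy / a) * min 1 (dy / b) + b / a * min 1 (dy / b) := by ring
    _ ≤ min 1 (dy / a) * 1 + 2 * min 1 (dy / c) := by
        have h0 : 0 ≤ min 1 (dy / a) := le_min zero_le_one (by positivity)
        gcongr
    _ ≤ 2 * min 1 (dy / c) + 2 * min 1 (dy / c) := by rw [mul_one]; gcongr ?_ + _
    _ = 4 * min 1 (dy / c) := by ring

lemma coreA {d α β a b c T dx dy dz : ℝ} (hd : 2 ≤ d) (hβ : 0 < β) (hcase : 2 * β < α)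
    (hα : α < 2) (ha : 0 < a) (hb : 0 < b) (hc : 0 < c) (hT : 0 < T)
    (hdx : 0 ≤ dx) (hdy : 0 ≤ dy) (hdz : 0 ≤ dz)
    (htri : c ≤ a + b) (hA : a ≤ 2 * b) (hbT : b ≤ T) :
    a ^ (α - d) * min 1 (dx / a) ^ (α / 2) * min 1 (dz / a) ^ (α / 2) *
      (b ^ (α - β - d) * min 1 (dy / b) ^ (α / 2)) ≤
    3 ^ d * T ^ (α / 2 - β) * a ^ (α / 2 - d) *
      (c ^ (α - d) * min 1 (dx / c) ^ (α / 2) * min 1 (dy / c) ^ (α / 2)) := by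
  have hα0 : 0 < α := by linarith
  have h2 : (0:ℝ) ≤ α / 2 := by linarith
  have hc3b : c ≤ 3 * b := by linarith
  have hxc0 : 0 ≤ min 1 (dx / c) := le_min zero_le_one (by positivity)
  have hyc0 : 0 ≤ min 1 (dy / c) := le_min zero_le_one (by positivity)
  have hxa0 : 0 ≤ min 1 (dx / a) := le_min zero_le_one (by positivity)
  have hya0 : 0 ≤ min 1 (dy / b) := le_min zero_le_one (by positivity)
  have hza0 : 0 ≤ min 1 (dz / a) := le_min zero_le_one (by positivity)
  have hk1 : (1:ℝ) ≤ 3 * b / a := by rw [le_div_iff₀ ha]; linarith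
  have e1 : min 1 (dx / a) ≤ 3 * b / a * min 1 (dx / c) := by
    refine min_ratio ha hc hdx hk1 ?_
    rw [div_mul_cancel₀ _ ha.ne']; linarith
  have e3 : min 1 (dy / b) ≤ 3 * min 1 (dy / c) := min_ratio hb hc hdy (by norm_num) (by linarith)
  have p1 : min 1 (dx / a) ^ (α / 2) ≤ (3 * b / a) ^ (α / 2) * min 1 (dx / c) ^ (α / 2) := by
    rw [← Real.mul_rpow (by positivity) hxc0]
    exact Real.rpow_le_rpow hxa0 e1 h2
  have p2 : min 1 (dz / a) ^ (α / 2) ≤ 1 := Real.rpow_le_one hza0 (min_le_left _ _) h2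
  have p3 : min 1 (dy / b) ^ (α / 2) ≤ (3:ℝ) ^ (α / 2) * min 1 (dy / c) ^ (α / 2) := by
    rw [← Real.mul_rpow (by norm_num) hyc0]
    exact Real.rpow_le_rpow hya0 e3 h2
  have hnum : a ^ (α - d) * (3 * b / a) ^ (α / 2) * (b ^ (α - β - d) * (3:ℝ) ^ (α / 2)) ≤
      3 ^ d * T ^ (α / 2 - β) * a ^ (α / 2 - d) * c ^ (α - d) := by
    have heq : a ^ (α - d) * (3 * b / a) ^ (α / 2) * (b ^ (α - β - d) * (3:ℝ) ^ (α / 2)) =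
        3 ^ d * b ^ (α / 2 - β) * a ^ (α / 2 - d) * (3 * b) ^ (α - d) := by
      rw [Real.div_rpow (by positivity) ha.le, Real.mul_rpow (by norm_num) hb.le,
        Real.mul_rpow (by norm_num) hb.le]
      simp only [Real.rpow_def_of_pos ha, Real.rpow_def_of_pos hb,
        Real.rpow_def_of_pos (show (0:ℝ) < 3 by norm_num)]
      rw [div_eq_mul_inv, ← Real.exp_neg]
      simp only [← Real.exp_add]
      congr 1; ring
    rw [heq]
    have hbound : (3 * b : ℝ) ^ (α - d) ≤ c ^ (α - d) :=
      Real.rpow_le_rpow_of_nonpos hc hc3b (by linarith)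
    have hbT' : b ^ (α / 2 - β) ≤ T ^ (α / 2 - β) := Real.rpow_le_rpow hb.le hbT (by linarith)
    have h3d : (0:ℝ) ≤ 3 ^ d := Real.rpow_nonneg (by norm_num) _
    have had : (0:ℝ) ≤ a ^ (α / 2 - d) := Real.rpow_nonneg ha.le _
    calc 3 ^ d * b ^ (α / 2 - β) * a ^ (α / 2 - d) * (3 * b) ^ (α - d)
        ≤ 3 ^ d * T ^ (α / 2 - β) * a ^ (α / 2 - d) * (3 * b) ^ (α - d) := by
          have : (0:ℝ) ≤ (3 * b) ^ (α - d) := Real.rpow_nonneg (by positivity) _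
          gcongr
      _ ≤ 3 ^ d * T ^ (α / 2 - β) * a ^ (α / 2 - d) * c ^ (α - d) := by
          have : (0:ℝ) ≤ 3 ^ d * T ^ (α / 2 - β) * a ^ (α / 2 - d) := by
            have := Real.rpow_nonneg hT.le (α / 2 - β); positivity
          exact mul_le_mul_of_nonneg_left hbound this
  calc a ^ (α - d) * min 1 (dx / a) ^ (α / 2) * min 1 (dz / a) ^ (α / 2) *
        (b ^ (α - β - d) * min 1 (dy / b) ^ (α / 2))
      ≤ a ^ (α - d) * ((3 * b / a) ^ (α / 2) * min 1 (dx / c) ^ (α / 2)) * 1 *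
        (b ^ (α - β - d) * ((3:ℝ) ^ (α / 2) * min 1 (dy / c) ^ (α / 2))) := by
        have h1 : (0:ℝ) ≤ a ^ (α - d) := Real.rpow_nonneg ha.le _
        have h2' : (0:ℝ) ≤ b ^ (α - β - d) := Real.rpow_nonneg hb.le _
        have h3 : (0:ℝ) ≤ min 1 (dx / a) ^ (α / 2) := Real.rpow_nonneg hxa0 _
        have h4 : (0:ℝ) ≤ min 1 (dz / a) ^ (α / 2) := Real.rpow_nonneg hza0 _
        have h5 : (0:ℝ) ≤ min 1 (dy / b) ^ (α / 2) := Real.rpow_nonneg hya0 _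
        gcongr
    _ = a ^ (α - d) * (3 * b / a) ^ (α / 2) * (b ^ (α - β - d) * (3:ℝ) ^ (α / 2)) *
        (min 1 (dx / c) ^ (α / 2) * min 1 (dy / c) ^ (α / 2)) := by ring
    _ ≤ 3 ^ d * T ^ (α / 2 - β) * a ^ (α / 2 - d) * c ^ (α - d) *
        (min 1 (dx / c) ^ (α / 2) * min 1 (dy / c) ^ (α / 2)) := by
        refine mul_le_mul_of_nonneg_right hnum ?_
        exact mul_nonneg (Real.rpow_nonneg hxc0 _) (Real.rpow_nonneg hyc0 _)
    _ = 3 ^ d * T ^ (α / 2 - β) * a ^ (α / 2 - d) *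
        (c ^ (α - d) * min 1 (dx / c) ^ (α / 2) * min 1 (dy / c) ^ (α / 2)) := by ring

lemma coreB {d α β a b c T dx dy dz : ℝ} (hd : 2 ≤ d) (hβ : 0 < β) (hcase : 2 * β < α)
    (hα : α < 2) (ha : 0 < a) (hb : 0 < b) (hc : 0 < c) (hT : 0 < T)
    (hdx : 0 ≤ dx) (hdy : 0 ≤ dy) (hdz : 0 ≤ dz)
    (htri : c ≤ a + b) (htri2 : a ≤ c + b) (hB : 2 * b ≤ a) (hbT : b ≤ T)
    (hzy : dz ≤ dy + b) :
    a ^ (α - d) * min 1 (dx / a) ^ (α / 2) * min 1 (dz / a) ^ (α / 2) *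
      (b ^ (α - β - d) * min 1 (dy / b) ^ (α / 2)) ≤
    2 ^ (d + 3) * T ^ (α / 2 - β) * b ^ (α / 2 - d) *
      (c ^ (α - d) * min 1 (dx / c) ^ (α / 2) * min 1 (dy / c) ^ (α / 2)) := by
  have hα0 : 0 < α := by linarith
  have h2 : (0:ℝ) ≤ α / 2 := by linarith
  have hc2a : c ≤ 2 * a := by linarith
  have ha2c : a ≤ 2 * c := by linarith
  have hxc0 : 0 ≤ min 1 (dx / c) := le_min zero_le_one (by positivity)
  have hyc0 : 0 ≤ min 1 (dy / c) := le_min zero_le_one (by positivity)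
  have hxa0 : 0 ≤ min 1 (dx / a) := le_min zero_le_one (by positivity)
  have hyb0 : 0 ≤ min 1 (dy / b) := le_min zero_le_one (by positivity)
  have hza0 : 0 ≤ min 1 (dz / a) := le_min zero_le_one (by positivity)
  -- p1 : ratio for x
  have e1 : min 1 (dx / a) ≤ 2 * min 1 (dx / c) := min_ratio ha hc hdx one_le_two hc2a
  have p1 : min 1 (dx / a) ^ (α / 2) ≤ 2 * min 1 (dx / c) ^ (α / 2) := by
    calc min 1 (dx / a) ^ (α / 2) ≤ (2 * min 1 (dx / c)) ^ (α / 2) :=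
          Real.rpow_le_rpow hxa0 e1 h2
      _ = (2:ℝ) ^ (α / 2) * min 1 (dx / c) ^ (α / 2) := Real.mul_rpow (by norm_num) hxc0
      _ ≤ 2 * min 1 (dx / c) ^ (α / 2) := by
          have h21 : (2:ℝ) ^ (α / 2) ≤ (2:ℝ) ^ (1:ℝ) :=
            Real.rpow_le_rpow_of_exponent_le one_le_two (by linarith)
          rw [Real.rpow_one] at h21
          exact mul_le_mul_of_nonneg_right h21 (Real.rpow_nonneg hxc0 _)
  -- p2 : product bound for z, y
  have e2 : min 1 (dz / a) * min 1 (dy / b) ≤ 4 * min 1 (dy / c) :=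
    min_prod ha hb hc hdy hB hc2a hzy
  have p2 : min 1 (dz / a) ^ (α / 2) * min 1 (dy / b) ^ (α / 2) ≤
      4 * min 1 (dy / c) ^ (α / 2) := by
    calc min 1 (dz / a) ^ (α / 2) * min 1 (dy / b) ^ (α / 2)
        = (min 1 (dz / a) * min 1 (dy / b)) ^ (α / 2) := (Real.mul_rpow hza0 hyb0).symm
      _ ≤ (4 * min 1 (dy / c)) ^ (α / 2) :=
          Real.rpow_le_rpow (mul_nonneg hza0 hyb0) e2 h2
      _ = (4:ℝ) ^ (α / 2) * min 1 (dy / c) ^ (α / 2) := Real.mul_rpow (by norm_num) hyc0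
      _ ≤ 4 * min 1 (dy / c) ^ (α / 2) := by
          have h41 : (4:ℝ) ^ (α / 2) ≤ (4:ℝ) ^ (1:ℝ) :=
            Real.rpow_le_rpow_of_exponent_le (by norm_num) (by linarith)
          rw [Real.rpow_one] at h41
          exact mul_le_mul_of_nonneg_right h41 (Real.rpow_nonneg hyc0 _)
  -- numeric part
  have hnum : a ^ (α - d) * b ^ (α - β - d) * 8 ≤
      2 ^ (d + 3) * T ^ (α / 2 - β) * b ^ (α / 2 - d) * c ^ (α - d) := by
    have h1 : a ^ (α - d) ≤ (c / 2) ^ (α - d) :=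
      Real.rpow_le_rpow_of_nonpos (by positivity) (by linarith) (by linarith)
    have h2' : (c / 2 : ℝ) ^ (α - d) = c ^ (α - d) / 2 ^ (α - d) :=
      Real.div_rpow hc.le (by norm_num : (0:ℝ) ≤ 2) _
    have hb2 : b ^ (α - β - d) = b ^ (α / 2 - β) * b ^ (α / 2 - d) := by
      rw [← Real.rpow_add hb]; ring_nf
    have hbT' : b ^ (α / 2 - β) ≤ T ^ (α / 2 - β) := Real.rpow_le_rpow hb.le hbT (by linarith)
    have h2pow : (8:ℝ) / 2 ^ (α - d) ≤ 2 ^ (d + 3) := by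
      rw [div_le_iff₀ (Real.rpow_pos_of_pos two_pos _)]
      rw [← Real.rpow_add two_pos]
      calc (8:ℝ) = 2 ^ ((3:ℝ)) := by
            rw [show (3:ℝ) = ((3:ℕ):ℝ) by norm_num, Real.rpow_natCast]; norm_num
        _ ≤ 2 ^ (d + 3 + (α - d)) := Real.rpow_le_rpow_of_exponent_le one_le_two (by linarith)
    calc a ^ (α - d) * b ^ (α - β - d) * 8
        ≤ (c / 2) ^ (α - d) * b ^ (α - β - d) * 8 := by
          have : (0:ℝ) ≤ b ^ (α - β - d) := Real.rpow_nonneg hb.le _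
          gcongr
      _ = (8 / 2 ^ (α - d)) * (b ^ (α / 2 - β) * b ^ (α / 2 - d)) * c ^ (α - d) := by
          rw [h2', ← hb2]; ring
      _ ≤ 2 ^ (d + 3) * (T ^ (α / 2 - β) * b ^ (α / 2 - d)) * c ^ (α - d) := by
          have hb0 : (0:ℝ) ≤ b ^ (α / 2 - d) := Real.rpow_nonneg hb.le _
          have hc0 : (0:ℝ) ≤ c ^ (α - d) := Real.rpow_nonneg hc.le _
          have hb1 : (0:ℝ) ≤ b ^ (α / 2 - β) := Real.rpow_nonneg hb.le _
          have h80 : (0:ℝ) ≤ 8 / 2 ^ (α - d) := by positivity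
          gcongr
      _ = 2 ^ (d + 3) * T ^ (α / 2 - β) * b ^ (α / 2 - d) * c ^ (α - d) := by ring
  -- combine
  calc a ^ (α - d) * min 1 (dx / a) ^ (α / 2) * min 1 (dz / a) ^ (α / 2) *
        (b ^ (α - β - d) * min 1 (dy / b) ^ (α / 2))
      = a ^ (α - d) * b ^ (α - β - d) * (min 1 (dx / a) ^ (α / 2)) *
        (min 1 (dz / a) ^ (α / 2) * min 1 (dy / b) ^ (α / 2)) := by ring
    _ ≤ a ^ (α - d) * b ^ (α - β - d) * (2 * min 1 (dx / c) ^ (α / 2)) *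
        (4 * min 1 (dy / c) ^ (α / 2)) := by
        have h1 : (0:ℝ) ≤ a ^ (α - d) := Real.rpow_nonneg ha.le _
        have h2' : (0:ℝ) ≤ b ^ (α - β - d) := Real.rpow_nonneg hb.le _
        have h3 : (0:ℝ) ≤ min 1 (dx / a) ^ (α / 2) := Real.rpow_nonneg hxa0 _
        have h4 : (0:ℝ) ≤ min 1 (dz / a) ^ (α / 2) * min 1 (dy / b) ^ (α / 2) :=
          mul_nonneg (Real.rpow_nonneg hza0 _) (Real.rpow_nonneg hyb0 _)
        gcongr
    _ = a ^ (α - d) * b ^ (α - β - d) * 8 *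
        (min 1 (dx / c) ^ (α / 2) * min 1 (dy / c) ^ (α / 2)) := by ring
    _ ≤ 2 ^ (d + 3) * T ^ (α / 2 - β) * b ^ (α / 2 - d) * c ^ (α - d) *
        (min 1 (dx / c) ^ (α / 2) * min 1 (dy / c) ^ (α / 2)) := by
        refine mul_le_mul_of_nonneg_right hnum ?_
        exact mul_nonneg (Real.rpow_nonneg hxc0 _) (Real.rpow_nonneg hyc0 _)
    _ = 2 ^ (d + 3) * T ^ (α / 2 - β) * b ^ (α / 2 - d) *
        (c ^ (α - d) * min 1 (dx / c) ^ (α / 2) * min 1 (dy / c) ^ (α / 2)) := by ring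

end Aux

/-- 3G-type inequality, case `α > 2β`. -/
theorem threeG_gh_case_gt (d : ℕ) (hd : 2 ≤ d) (α β : ℝ)
    (hβ : 0 < β) (hβα : β < α) (hα : α < 2) (hcase : 2 * β < α) :
    ∃ C > 0, ∀ D : Set (EuclideanSpace ℝ (Fin d)), IsOpen D → Bornology.IsBounded D →
      ∀ x ∈ D, ∀ y ∈ D, ∀ z ∈ D, x ≠ y → x ≠ z → y ≠ z →
        gKer α D x z * hKer α β D z y ≤
          C * Metric.diam D ^ (α / 2 - β) *
            (‖x - z‖ ^ (-((d : ℝ) - α / 2)) + ‖y - z‖ ^ (-((d : ℝ) - α / 2))) *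
            gKer α D x y := by
  have h3 : (0:ℝ) < 3 ^ (d:ℝ) := Real.rpow_pos_of_pos (by norm_num) _
  have h2 : (0:ℝ) < 2 ^ ((d:ℝ) + 3) := Real.rpow_pos_of_pos (by norm_num) _
  refine ⟨3 ^ (d:ℝ) + 2 ^ ((d:ℝ) + 3), by linarith, ?_⟩
  intro D hD hDb x hx y hy z hz hxy hxz hyz
  have hd' : (2:ℝ) ≤ (d:ℝ) := by exact_mod_cast hd
  have ha : (0:ℝ) < ‖x - z‖ := norm_pos_iff.mpr (sub_ne_zero_of_ne hxz)
  have hb : (0:ℝ) < ‖z - y‖ := norm_pos_iff.mpr (sub_ne_zero_of_ne (Ne.symm hyz))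
  have hc : (0:ℝ) < ‖x - y‖ := norm_pos_iff.mpr (sub_ne_zero_of_ne hxy)
  have hbT : ‖z - y‖ ≤ Metric.diam D := by
    rw [← dist_eq_norm]; exact Metric.dist_le_diam_of_mem hDb hz hy
  have hT : (0:ℝ) < Metric.diam D := lt_of_lt_of_le hb hbT
  have htri : ‖x - y‖ ≤ ‖x - z‖ + ‖z - y‖ := by
    calc ‖x - y‖ = ‖(x - z) + (z - y)‖ := by rw [sub_add_sub_cancel]
      _ ≤ ‖x - z‖ + ‖z - y‖ := norm_add_le _ _
  have htri2 : ‖x - z‖ ≤ ‖x - y‖ + ‖z - y‖ := by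
    calc ‖x - z‖ = ‖(x - y) + (y - z)‖ := by rw [sub_add_sub_cancel]
      _ ≤ ‖x - y‖ + ‖y - z‖ := norm_add_le _ _
      _ = ‖x - y‖ + ‖z - y‖ := by rw [norm_sub_rev y z]
  have hdx : 0 ≤ deltaD D x := Metric.infDist_nonneg
  have hdy : 0 ≤ deltaD D y := Metric.infDist_nonneg
  have hdz : 0 ≤ deltaD D z := Metric.infDist_nonneg
  have hzy : deltaD D z ≤ deltaD D y + ‖z - y‖ := by
    rw [← dist_eq_norm]
    exact Metric.infDist_le_infDist_add_dist
  have hyzn : ‖y - z‖ = ‖z - y‖ := norm_sub_rev y z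
  have hexp : -((d : ℝ) - α / 2) = α / 2 - (d:ℝ) := by ring
  simp only [gKer, hKer, if_pos hcase, hyzn, hexp]
  set a := ‖x - z‖
  set b := ‖z - y‖
  set c := ‖x - y‖
  set T := Metric.diam D
  have hG : 0 ≤ c ^ (α - (d:ℝ)) * min 1 (deltaD D x / c) ^ (α / 2) *
      min 1 (deltaD D y / c) ^ (α / 2) := by
    have h1 : (0:ℝ) ≤ min 1 (deltaD D x / c) := le_min zero_le_one (by positivity)
    have h2 : (0:ℝ) ≤ min 1 (deltaD D y / c) := le_min zero_le_one (by positivity)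
    exact mul_nonneg (mul_nonneg (Real.rpow_nonneg hc.le _) (Real.rpow_nonneg h1 _))
      (Real.rpow_nonneg h2 _)
  have hTe : (0:ℝ) ≤ T ^ (α / 2 - β) := Real.rpow_nonneg hT.le _
  have hap : (0:ℝ) ≤ a ^ (α / 2 - (d:ℝ)) := Real.rpow_nonneg ha.le _
  have hbp : (0:ℝ) ≤ b ^ (α / 2 - (d:ℝ)) := Real.rpow_nonneg hb.le _
  rcases le_total a (2 * b) with hAB | hAB
  · calc a ^ (α - (d:ℝ)) * min 1 (deltaD D x / a) ^ (α / 2) *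
          min 1 (deltaD D z / a) ^ (α / 2) *
          (b ^ (α - β - (d:ℝ)) * min 1 (deltaD D y / b) ^ (α / 2))
        ≤ 3 ^ (d:ℝ) * T ^ (α / 2 - β) * a ^ (α / 2 - (d:ℝ)) *
          (c ^ (α - (d:ℝ)) * min 1 (deltaD D x / c) ^ (α / 2) *
            min 1 (deltaD D y / c) ^ (α / 2)) :=
          coreA hd' hβ hcase hα ha hb hc hT hdx hdy hdz htri hAB hbT
      _ ≤ (3 ^ (d:ℝ) + 2 ^ ((d:ℝ) + 3)) * T ^ (α / 2 - β) *
          (a ^ (α / 2 - (d:ℝ)) + b ^ (α / 2 - (d:ℝ))) *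
          (c ^ (α - (d:ℝ)) * min 1 (deltaD D x / c) ^ (α / 2) *
            min 1 (deltaD D y / c) ^ (α / 2)) := by
          refine mul_le_mul_of_nonneg_right ?_ hG
          have h1 : (3:ℝ) ^ (d:ℝ) ≤ 3 ^ (d:ℝ) + 2 ^ ((d:ℝ) + 3) := by linarith
          have h2' : a ^ (α / 2 - (d:ℝ)) ≤ a ^ (α / 2 - (d:ℝ)) + b ^ (α / 2 - (d:ℝ)) := by
            linarith
          exact mul_le_mul (mul_le_mul h1 le_rfl hTe (by linarith)) h2' hap
            (by positivity)
  · have hB : 2 * b ≤ a := hAB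
    calc a ^ (α - (d:ℝ)) * min 1 (deltaD D x / a) ^ (α / 2) *
          min 1 (deltaD D z / a) ^ (α / 2) *
          (b ^ (α - β - (d:ℝ)) * min 1 (deltaD D y / b) ^ (α / 2))
        ≤ 2 ^ ((d:ℝ) + 3) * T ^ (α / 2 - β) * b ^ (α / 2 - (d:ℝ)) *
          (c ^ (α - (d:ℝ)) * min 1 (deltaD D x / c) ^ (α / 2) *
            min 1 (deltaD D y / c) ^ (α / 2)) :=
          coreB hd' hβ hcase hα ha hb hc hT hdx hdy hdz htri htri2 hB hbT hzy
      _ ≤ (3 ^ (d:ℝ) + 2 ^ ((d:ℝ) + 3)) * T ^ (α / 2 - β) *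
          (a ^ (α / 2 - (d:ℝ)) + b ^ (α / 2 - (d:ℝ))) *
          (c ^ (α - (d:ℝ)) * min 1 (deltaD D x / c) ^ (α / 2) *
            min 1 (deltaD D y / c) ^ (α / 2)) := by
          refine mul_le_mul_of_nonneg_right ?_ hG
          have h1 : (2:ℝ) ^ ((d:ℝ) + 3) ≤ 3 ^ (d:ℝ) + 2 ^ ((d:ℝ) + 3) := by linarith
          have h2' : b ^ (α / 2 - (d:ℝ)) ≤ a ^ (α / 2 - (d:ℝ)) + b ^ (α / 2 - (d:ℝ)) := by
            linarith
          exact mul_le_mul (mul_le_mul h1 le_rfl hTe (by linarith)) h2' hbp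
            (by positivity)
end
end

section
/- Let d ≥ 2 and 0 < β < α < 2 with α < 2β, and let D ⊂ ℝ^d be a bounded open set. Then there exists a constant C = C(d, α, β) > 0 such that for all pairwise distinct x, y, z ∈ D: g_D(x,z)·h_D(z,y) ≤ C·( |x−z|^{−(d−α+β)} + |y−z|^{−(d−α+β)} )·g_D(x,y). -/
open MeasureTheory Metric Set

noncomputable section

-- helper: collect rpow
private lemma rpw_collect {x : ℝ} (hx : 0 < x) (u v : ℝ) : x^u * x^v = x^(u+v) :=
  (Real.rpow_add hx u v).symm

private lemma min_nonneg' {u : ℝ} (hu : 0 ≤ u) : 0 ≤ min 1 u := le_min zero_le_one hu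

private lemma max_pos' {u : ℝ} : (0:ℝ) < max 1 u := lt_of_lt_of_le zero_lt_one (le_max_left _ _)

/-- scaling of min: if `r ≤ 2 s` then `min 1 (a/s) ≤ 2 * min 1 (a/r)` -/
private lemma min_le_two_mul_min {a r s : ℝ} (hr : 0 < r) (hs : 0 < s) (ha : 0 ≤ a)
    (h : r ≤ 2*s) : min 1 (a/s) ≤ 2 * min 1 (a/r) := by
  rcases le_total r a with h1 | h1
  · have h2 : min 1 (a/r) = 1 := min_eq_left (by rw [le_div_iff₀ hr]; linarith)
    rw [h2]
    have := min_le_left 1 (a/s); linarith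
  · have h2 : min 1 (a/r) = a/r := min_eq_right ((div_le_one hr).mpr h1)
    rw [h2]
    have h3 : a/s ≤ 2*(a/r) := by
      rw [div_le_iff₀ hs, show 2*(a/r)*s = 2*a*s/r by ring, le_div_iff₀ hr]
      nlinarith
    exact le_trans (min_le_right _ _) h3

/-- scaling of min: if `s ≤ r` then `min 1 (a/s) ≤ (r/s) * min 1 (a/r)` -/
private lemma min_le_ratio_mul_min {a r s : ℝ} (hr : 0 < r) (hs : 0 < s) (ha : 0 ≤ a)
    (h : s ≤ r) : min 1 (a/s) ≤ (r/s) * min 1 (a/r) := by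
  rcases le_total r a with h1 | h1
  · have h2 : min 1 (a/r) = 1 := min_eq_left (by rw [le_div_iff₀ hr]; linarith)
    have h3 : (1:ℝ) ≤ r/s := (one_le_div hs).mpr h
    rw [h2, mul_one]
    exact le_trans (min_le_left _ _) h3
  · have h2 : min 1 (a/r) = a/r := min_eq_right ((div_le_one hr).mpr h1)
    rw [h2]
    have h3 : (r/s) * (a/r) = a/s := by field_simp
    rw [h3]
    exact min_le_right _ _

private lemma split_rpow {p q A M : ℝ} (hA : 0 ≤ A) (hM : 0 ≤ M) (hq : 0 ≤ q)
    (hpq : q ≤ p) : A^p * M^q = A^(p-q) * (A*M)^q := by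
  have h : p - q + q = p := by ring
  rw [Real.mul_rpow hA hM, ← mul_assoc, ← Real.rpow_add_of_nonneg hA (by linarith) hq, h]

private lemma master {p q A M Z : ℝ} (hq : 0 ≤ q) (hpq : q ≤ p) (hA : 0 ≤ A) (hM : 0 ≤ M)
    (h1 : A ≤ Z) (h2 : A*M ≤ Z) : A^p * M^q ≤ Z^p := by
  have hZ : 0 ≤ Z := le_trans hA h1
  have h : p - q + q = p := by ring
  rw [split_rpow hA hM hq hpq]
  calc A^(p-q) * (A*M)^q ≤ Z^(p-q) * Z^q := by
        apply mul_le_mul (Real.rpow_le_rpow hA h1 (by linarith))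
          (Real.rpow_le_rpow (by positivity) h2 hq) (by positivity) (by positivity)
    _ = Z^p := by rw [← Real.rpow_add_of_nonneg hZ (by linarith) hq, h]

private lemma claimB {c s t : ℝ} (hc : 0 < c) (hs : 0 < s) (ht : 0 < t) :
    min 1 (c/s) * max 1 (t/c) ≤ max 1 (t/s) := by
  rcases le_total t c with h | h
  · rw [max_eq_left ((div_le_one hc).mpr h), mul_one]
    exact le_trans (min_le_left _ _) (le_max_left _ _)
  · rw [max_eq_right ((one_le_div hc).mpr h)]
    calc min 1 (c/s) * (t/c) ≤ (c/s) * (t/c) :=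
          mul_le_mul_of_nonneg_right (min_le_right _ _) (by positivity)
      _ = t/s := by field_simp
      _ ≤ max 1 (t/s) := le_max_right _ _

/-- Lemma B: `m_cs^p * M(t/c)^q ≤ max(1,t/s)^q` -/
private lemma lemB {p q c s t : ℝ} (hc : 0 < c) (hs : 0 < s) (ht : 0 < t)
    (hq : 0 ≤ q) (hpq : q ≤ p) :
    (min 1 (c/s))^p * (max 1 (t/c))^q ≤ (max 1 (t/s))^q := by
  have hA : 0 ≤ min 1 (c/s) := min_nonneg' (by positivity)
  have hM : 0 ≤ max 1 (t/c) := max_pos'.le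
  rw [split_rpow hA hM hq hpq]
  calc (min 1 (c/s))^(p-q) * (min 1 (c/s) * max 1 (t/c))^q
      ≤ 1 * (max 1 (t/s))^q := by
        apply mul_le_mul (Real.rpow_le_one hA (min_le_left _ _) (by linarith))
          (Real.rpow_le_rpow (by positivity) (claimB hc hs ht) hq)
          (by positivity) zero_le_one
    _ = (max 1 (t/s))^q := one_mul _

private lemma claimA1 {r s t b c : ℝ} (hr : 0 < r) (hs : 0 < s) (ht : 0 < t)
    (hb : 0 < b) (hc : 0 < c) (hts : t ≤ s) (hr2s : r ≤ 2*s) (hcb : c ≤ b + t) :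
    min 1 (c/s) * min 1 (b/t) ≤ 4 * min 1 (b/r) := by
  rcases le_total r b with h1 | h1
  · rw [show min 1 (b/r) = 1 from min_eq_left (by rw [le_div_iff₀ hr]; linarith)]
    have e3 : 0 ≤ min 1 (c/s) := min_nonneg' (by positivity)
    calc min 1 (c/s) * min 1 (b/t) ≤ 1 * 1 :=
          mul_le_mul (min_le_left _ _) (min_le_left _ _)
            (min_nonneg' (by positivity)) zero_le_one
      _ ≤ 4 * 1 := by norm_num
  · rw [min_eq_right ((div_le_one hr).mpr h1)]
    rcases le_total b t with h2 | h2
    · calc min 1 (c/s) * min 1 (b/t) ≤ (c/s) * (b/t) :=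
            mul_le_mul (min_le_right _ _) (min_le_right _ _)
              (min_nonneg' (by positivity)) (by positivity)
        _ ≤ 4 * (b/r) := by
            rw [div_mul_div_comm, div_le_iff₀ (by positivity),
              show 4*(b/r)*(s*t) = 4*b*s*t/r by ring, le_div_iff₀ hr]
            have H : c*r ≤ 2*t*(2*s) :=
              mul_le_mul (by linarith) hr2s hr.le (by positivity)
            nlinarith [mul_nonneg (sub_nonneg.mpr H) hb.le]
    · calc min 1 (c/s) * min 1 (b/t) ≤ (c/s) * 1 :=
            mul_le_mul (min_le_right _ _) (min_le_left _ _)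
              (min_nonneg' (by positivity)) (by positivity)
        _ = c/s := mul_one _
        _ ≤ 4 * (b/r) := by
            rw [div_le_iff₀ hs, show 4*(b/r)*s = 4*b*s/r by ring, le_div_iff₀ hr]
            have H : c*r ≤ 2*b*(2*s) :=
              mul_le_mul (by linarith) hr2s hr.le (by positivity)
            nlinarith [H]

private lemma claimA2 {r s t b c : ℝ} (hr : 0 < r) (hs : 0 < s) (ht : 0 < t)
    (hb : 0 < b) (hc : 0 < c) (hts : t ≤ s) (hr2s : r ≤ 2*s) (hcb : c ≤ b + t) :
    min 1 (c/s) * min 1 (b/t) * max 1 (t/c) ≤ 4 * min 1 (b/r) := by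
  rcases le_total t c with h | h
  · rw [max_eq_left ((div_le_one hc).mpr h), mul_one]
    exact claimA1 hr hs ht hb hc hts hr2s hcb
  · rw [max_eq_right ((one_le_div hc).mpr h)]
    have key : min 1 (c/s) * min 1 (b/t) * (t/c) ≤ (t/s) * min 1 (b/t) := by
      have e1 : min 1 (c/s) * min 1 (b/t) * (t/c) = (min 1 (c/s) * (t/c)) * min 1 (b/t) := by
        ring
      rw [e1]
      apply mul_le_mul_of_nonneg_right _ (min_nonneg' (by positivity))
      calc min 1 (c/s) * (t/c) ≤ (c/s) * (t/c) :=
            mul_le_mul_of_nonneg_right (min_le_right _ _) (by positivity)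
        _ = t/s := by field_simp
    refine le_trans key ?_
    rcases le_total r b with h1 | h1
    · rw [show min 1 (b/r) = 1 from min_eq_left (by rw [le_div_iff₀ hr]; linarith)]
      calc (t/s) * min 1 (b/t) ≤ 1 * 1 :=
            mul_le_mul ((div_le_one hs).mpr hts) (min_le_left _ _)
              (min_nonneg' (by positivity)) zero_le_one
        _ ≤ 4 * 1 := by norm_num
    · rw [min_eq_right ((div_le_one hr).mpr h1)]
      rcases le_total b t with h2 | h2
      · calc (t/s) * min 1 (b/t) ≤ (t/s) * (b/t) :=
              mul_le_mul_of_nonneg_left (min_le_right _ _) (by positivity)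
          _ = b/s := by field_simp
          _ ≤ 4 * (b/r) := by
              rw [div_le_iff₀ hs, show 4*(b/r)*s = 4*b*s/r by ring, le_div_iff₀ hr]
              nlinarith
      · calc (t/s) * min 1 (b/t) ≤ (t/s) * 1 :=
              mul_le_mul_of_nonneg_left (min_le_left _ _) (by positivity)
          _ = t/s := mul_one _
          _ ≤ 4 * (b/r) := by
              rw [div_le_iff₀ hs, show 4*(b/r)*s = 4*b*s/r by ring, le_div_iff₀ hr]
              have H : t*r ≤ b*(4*s) := mul_le_mul h2 (by linarith) hr.le hb.le
              nlinarith [H]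

/-- Lemma A, case `t ≤ s`. -/
private lemma lemA {p q r s t b c : ℝ} (hr : 0 < r) (hs : 0 < s) (ht : 0 < t)
    (hb : 0 < b) (hc : 0 < c) (hts : t ≤ s) (hr2s : r ≤ 2*s) (hcb : c ≤ b + t)
    (hq : 0 ≤ q) (hpq : q ≤ p) :
    (min 1 (c/s))^p * (min 1 (b/t))^p * (max 1 (t/c))^q ≤ (4:ℝ)^p * (min 1 (b/r))^p := by
  have h1 : 0 ≤ min 1 (c/s) := min_nonneg' (by positivity)
  have h2 : 0 ≤ min 1 (b/t) := min_nonneg' (by positivity)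
  have h3 : 0 ≤ min 1 (b/r) := min_nonneg' (by positivity)
  rw [← Real.mul_rpow h1 h2, ← Real.mul_rpow (by norm_num) h3]
  exact master hq hpq (by positivity) max_pos'.le
    (claimA1 hr hs ht hb hc hts hr2s hcb) (claimA2 hr hs ht hb hc hts hr2s hcb)

private lemma key {d α β : ℝ} (hd : 2 ≤ d) (hβ : 0 < β) (hβα : β < α) (hα : α < 2)
    (hcase : α < 2*β) {r s t a b c : ℝ}
    (hr : 0 < r) (hs : 0 < s) (ht : 0 < t) (ha : 0 < a) (hb : 0 < b) (hc : 0 < c)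
    (hrst : r ≤ s + t) (htrs : t ≤ r + s) (hcb : c ≤ b + t) :
    s^(α-d) * (min 1 (a/s))^(α/2) * (min 1 (c/s))^(α/2)
      * (t^(α-β-d) * (min 1 (b/t))^(α/2) * (max 1 (t/c))^(β-α/2))
    ≤ 2^(d+2*β) * (s^(-(d-α+β)) + t^(-(d-α+β)))
      * (r^(α-d) * (min 1 (a/r))^(α/2) * (min 1 (b/r))^(α/2)) := by
  have hα0 : 0 < α := lt_trans hβ hβα
  have hp : (0:ℝ) < α/2 := by linarith
  have hq : (0:ℝ) < β - α/2 := by linarith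
  have hqp : β - α/2 ≤ α/2 := by linarith
  have hmas : 0 ≤ min 1 (a/s) := min_nonneg' (by positivity)
  have hmar : 0 ≤ min 1 (a/r) := min_nonneg' (by positivity)
  have hmbt : 0 ≤ min 1 (b/t) := min_nonneg' (by positivity)
  have hmbr : 0 ≤ min 1 (b/r) := min_nonneg' (by positivity)
  have hmcs : 0 ≤ min 1 (c/s) := min_nonneg' (by positivity)
  have hEt : t^(α-β-d) = t^(-(d-α+β)) := by rw [show α-β-d = -(d-α+β) from by ring]
  have h4p : (4:ℝ)^(α/2) = 2^(α/2) * 2^(α/2) := by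
    rw [show (4:ℝ) = 2*2 from by norm_num, Real.mul_rpow (by norm_num) (by norm_num)]
  rcases le_total t s with hts | hst
  · -- Case I : t ≤ s, use the `t` term on the RHS
    have hr2s : r ≤ 2*s := by linarith
    have BA : (min 1 (c/s))^(α/2) * (min 1 (b/t))^(α/2) * (max 1 (t/c))^(β-α/2)
        ≤ (4:ℝ)^(α/2) * (min 1 (b/r))^(α/2) :=
      lemA hr hs ht hb hc hts hr2s hcb hq.le hqp
    have Bas : (min 1 (a/s))^(α/2) ≤ 2^(α/2) * (min 1 (a/r))^(α/2) := by
      rw [← Real.mul_rpow (by norm_num) hmar]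
      exact Real.rpow_le_rpow hmas (min_le_two_mul_min hr hs ha.le hr2s) hp.le
    have Bs : s^(α-d) ≤ 2^(d-α) * r^(α-d) := by
      have h1 : s^(α-d) ≤ (r/2)^(α-d) :=
        Real.rpow_le_rpow_of_nonpos (by positivity) (by linarith) (by linarith)
      have h2 : (r/2)^(α-d) = 2^(d-α) * r^(α-d) := by
        rw [Real.div_rpow hr.le (by norm_num), div_eq_mul_inv,
          ← Real.rpow_neg (by norm_num), show -(α-d) = d-α from by ring]
        ring
      linarith [h1, h2.le, h2.ge]
    calc s^(α-d) * (min 1 (a/s))^(α/2) * (min 1 (c/s))^(α/2)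
          * (t^(α-β-d) * (min 1 (b/t))^(α/2) * (max 1 (t/c))^(β-α/2))
        = s^(α-d) * (min 1 (a/s))^(α/2)
          * ((min 1 (c/s))^(α/2) * (min 1 (b/t))^(α/2) * (max 1 (t/c))^(β-α/2))
          * t^(α-β-d) := by ring
      _ ≤ (2^(d-α) * r^(α-d)) * (2^(α/2) * (min 1 (a/r))^(α/2))
          * ((4:ℝ)^(α/2) * (min 1 (b/r))^(α/2)) * t^(α-β-d) := by
          have e1 : (0:ℝ) ≤ t^(α-β-d) := by positivity
          have e2 : (0:ℝ) ≤ (min 1 (c/s))^(α/2) * (min 1 (b/t))^(α/2)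
              * (max 1 (t/c))^(β-α/2) := by positivity
          have e3 : (0:ℝ) ≤ (4:ℝ)^(α/2) * (min 1 (b/r))^(α/2) := by positivity
          have e4 : (0:ℝ) ≤ 2^(α/2) * (min 1 (a/r))^(α/2) := by positivity
          have e5 : (0:ℝ) ≤ 2^(d-α) * r^(α-d) := by positivity
          have e6 : (0:ℝ) ≤ s^(α-d) := by positivity
          have e7 : (0:ℝ) ≤ (min 1 (a/s))^(α/2) := by positivity
          apply mul_le_mul _ le_rfl e1 (by positivity)
          apply mul_le_mul _ BA e2 (by positivity)
          exact mul_le_mul Bs Bas e7 e5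
      _ = (2^(d-α) * 2^(α/2) * (2^(α/2) * 2^(α/2))) * t^(α-β-d)
          * (r^(α-d) * (min 1 (a/r))^(α/2) * (min 1 (b/r))^(α/2)) := by
          rw [h4p]; ring
      _ ≤ 2^(d+2*β) * (s^(-(d-α+β)) + t^(-(d-α+β)))
          * (r^(α-d) * (min 1 (a/r))^(α/2) * (min 1 (b/r))^(α/2)) := by
          apply mul_le_mul_of_nonneg_right _ (by positivity)
          have c1 : 2^(d-α) * 2^(α/2) * (2^(α/2) * 2^(α/2)) = (2:ℝ)^(d-α+α/2+(α/2+α/2)) := by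
            rw [rpw_collect (by norm_num : (0:ℝ) < 2) (α/2) (α/2),
              rpw_collect (by norm_num : (0:ℝ) < 2) (d-α) (α/2),
              rpw_collect (by norm_num : (0:ℝ) < 2) (d-α+α/2) (α/2+α/2)]
          have c2 : (2:ℝ)^(d-α+α/2+(α/2+α/2)) ≤ 2^(d+2*β) :=
            Real.rpow_le_rpow_of_exponent_le one_le_two (by linarith)
          have c3 : t^(α-β-d) ≤ s^(-(d-α+β)) + t^(-(d-α+β)) := by
            rw [hEt]; have : (0:ℝ) ≤ s^(-(d-α+β)) := by positivity
            linarith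
          calc 2^(d-α) * 2^(α/2) * (2^(α/2) * 2^(α/2)) * t^(α-β-d)
                ≤ 2^(d+2*β) * t^(α-β-d) := by
                  apply mul_le_mul_of_nonneg_right _ (by positivity)
                  rw [c1]; exact c2
            _ ≤ 2^(d+2*β) * (s^(-(d-α+β)) + t^(-(d-α+β))) :=
                  mul_le_mul_of_nonneg_left c3 (by positivity)
  · -- Case II : s ≤ t, use the `s` term on the RHS
    have hr2t : r ≤ 2*t := by linarith
    have Bbt : (min 1 (b/t))^(α/2) ≤ 2^(α/2) * (min 1 (b/r))^(α/2) := by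
      rw [← Real.mul_rpow (by norm_num) hmbr]
      exact Real.rpow_le_rpow hmbt (min_le_two_mul_min hr ht hb.le hr2t) hp.le
    have Bcs : (min 1 (c/s))^(α/2) * (max 1 (t/c))^(β-α/2) ≤ (t/s)^(β-α/2) := by
      have h := lemB (p := α/2) hc hs ht hq.le hqp
      rwa [max_eq_right ((one_le_div hs).mpr hst)] at h
    have hdiv : ∀ z : ℝ, (r/s)^z = r^z * s^(-z) := fun z => by
      rw [Real.div_rpow hr.le hs.le, Real.rpow_neg hs.le, div_eq_mul_inv]
    rcases le_total s r with hsr | hrs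
    · -- Case IIa : s ≤ r
      have Bas : (min 1 (a/s))^(α/2) ≤ (r/s)^(α/2) * (min 1 (a/r))^(α/2) := by
        rw [← Real.mul_rpow (by positivity) hmar]
        exact Real.rpow_le_rpow hmas (min_le_ratio_mul_min hr hs ha.le hsr) hp.le
      have Bts : (t/s)^(β-α/2) ≤ 2^(β-α/2) * (r/s)^(β-α/2) := by
        rw [← Real.mul_rpow (by norm_num) (by positivity)]
        apply Real.rpow_le_rpow (by positivity) _ hq.le
        rw [div_le_iff₀ hs, show 2*(r/s)*s = 2*r*s/s by ring, mul_div_assoc,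
          div_self hs.ne', mul_one]
        linarith
      have Bt : t^(α-β-d) ≤ 2^(d-α+β) * r^(α-β-d) := by
        have h1 : t^(α-β-d) ≤ (r/2)^(α-β-d) :=
          Real.rpow_le_rpow_of_nonpos (by positivity) (by linarith) (by linarith)
        have h2 : (r/2)^(α-β-d) = 2^(d-α+β) * r^(α-β-d) := by
          rw [Real.div_rpow hr.le (by norm_num), div_eq_mul_inv,
            ← Real.rpow_neg (by norm_num), show -(α-β-d) = d-α+β from by ring]
          ring
        linarith [h2.le, h2.ge]
      have P : s^(α-d) * (r/s)^(α/2) * (r/s)^(β-α/2) * r^(α-β-d)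
          = s^(-(d-α+β)) * r^(α-d) := by
        rw [hdiv (α/2), hdiv (β-α/2),
          show s^(α-d) * (r^(α/2) * s^(-(α/2))) * (r^(β-α/2) * s^(-(β-α/2))) * r^(α-β-d)
            = s^(α-d) * s^(-(α/2)) * s^(-(β-α/2)) * (r^(α/2) * r^(β-α/2) * r^(α-β-d))
            from by ring,
          rpw_collect hs (α-d) (-(α/2)), rpw_collect hs (α-d+-(α/2)) (-(β-α/2)),
          rpw_collect hr (α/2) (β-α/2), rpw_collect hr (α/2+(β-α/2)) (α-β-d),
          show α-d+-(α/2)+-(β-α/2) = -(d-α+β) from by ring,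
          show α/2+(β-α/2)+(α-β-d) = α-d from by ring]
      calc s^(α-d) * (min 1 (a/s))^(α/2) * (min 1 (c/s))^(α/2)
            * (t^(α-β-d) * (min 1 (b/t))^(α/2) * (max 1 (t/c))^(β-α/2))
          = s^(α-d) * (min 1 (a/s))^(α/2)
            * ((min 1 (c/s))^(α/2) * (max 1 (t/c))^(β-α/2))
            * t^(α-β-d) * (min 1 (b/t))^(α/2) := by ring
        _ ≤ s^(α-d) * ((r/s)^(α/2) * (min 1 (a/r))^(α/2))
            * (2^(β-α/2) * (r/s)^(β-α/2))
            * (2^(d-α+β) * r^(α-β-d)) * (2^(α/2) * (min 1 (b/r))^(α/2)) := by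
            apply mul_le_mul _ Bbt (by positivity) (by positivity)
            apply mul_le_mul _ Bt (by positivity) (by positivity)
            apply mul_le_mul _ (le_trans Bcs Bts) (by positivity) (by positivity)
            exact mul_le_mul_of_nonneg_left Bas (by positivity)
        _ = (2^(β-α/2) * 2^(d-α+β) * 2^(α/2))
            * (s^(α-d) * (r/s)^(α/2) * (r/s)^(β-α/2) * r^(α-β-d))
            * ((min 1 (a/r))^(α/2) * (min 1 (b/r))^(α/2)) := by ring
        _ = (2^(β-α/2) * 2^(d-α+β) * 2^(α/2)) * s^(-(d-α+β))
            * (r^(α-d) * (min 1 (a/r))^(α/2) * (min 1 (b/r))^(α/2)) := by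
            rw [P]; ring
        _ ≤ 2^(d+2*β) * (s^(-(d-α+β)) + t^(-(d-α+β)))
            * (r^(α-d) * (min 1 (a/r))^(α/2) * (min 1 (b/r))^(α/2)) := by
            apply mul_le_mul_of_nonneg_right _ (by positivity)
            have c1 : 2^(β-α/2) * 2^(d-α+β) * 2^(α/2) = (2:ℝ)^(β-α/2+(d-α+β)+α/2) := by
              rw [rpw_collect (by norm_num : (0:ℝ) < 2) (β-α/2) (d-α+β),
                rpw_collect (by norm_num : (0:ℝ) < 2) (β-α/2+(d-α+β)) (α/2)]
            have c2 : (2:ℝ)^(β-α/2+(d-α+β)+α/2) ≤ 2^(d+2*β) :=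
              Real.rpow_le_rpow_of_exponent_le one_le_two (by linarith)
            have c3 : s^(-(d-α+β)) ≤ s^(-(d-α+β)) + t^(-(d-α+β)) := by
              have : (0:ℝ) ≤ t^(-(d-α+β)) := by positivity
              linarith
            calc 2^(β-α/2) * 2^(d-α+β) * 2^(α/2) * s^(-(d-α+β))
                  ≤ 2^(d+2*β) * s^(-(d-α+β)) := by
                    apply mul_le_mul_of_nonneg_right _ (by positivity)
                    rw [c1]; exact c2
              _ ≤ 2^(d+2*β) * (s^(-(d-α+β)) + t^(-(d-α+β))) :=
                    mul_le_mul_of_nonneg_left c3 (by positivity)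
    · -- Case IIb : r ≤ s ≤ t
      have Bas : (min 1 (a/s))^(α/2) ≤ (min 1 (a/r))^(α/2) := by
        apply Real.rpow_le_rpow hmas _ hp.le
        apply min_le_min le_rfl
        rw [div_le_div_iff₀ hs hr]; nlinarith
      have Bbt : (min 1 (b/t))^(α/2) ≤ (min 1 (b/r))^(α/2) := by
        apply Real.rpow_le_rpow hmbt _ hp.le
        apply min_le_min le_rfl
        rw [div_le_div_iff₀ ht hr]; nlinarith
      have Bts : (t/s)^(β-α/2) ≤ 2^(β-α/2) :=
        Real.rpow_le_rpow (by positivity) ((div_le_iff₀ hs).mpr (by linarith)) hq.le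
      have Bs : s^(α-d) ≤ r^(α-d) :=
        Real.rpow_le_rpow_of_nonpos hr hrs (by linarith)
      have Bt : t^(α-β-d) ≤ s^(-(d-α+β)) := by
        rw [hEt]
        exact Real.rpow_le_rpow_of_nonpos hs hst (by linarith)
      calc s^(α-d) * (min 1 (a/s))^(α/2) * (min 1 (c/s))^(α/2)
            * (t^(α-β-d) * (min 1 (b/t))^(α/2) * (max 1 (t/c))^(β-α/2))
          = s^(α-d) * (min 1 (a/s))^(α/2)
            * ((min 1 (c/s))^(α/2) * (max 1 (t/c))^(β-α/2))
            * t^(α-β-d) * (min 1 (b/t))^(α/2) := by ring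
        _ ≤ r^(α-d) * (min 1 (a/r))^(α/2) * 2^(β-α/2) * s^(-(d-α+β))
            * (min 1 (b/r))^(α/2) := by
            apply mul_le_mul _ Bbt (by positivity) (by positivity)
            apply mul_le_mul _ Bt (by positivity) (by positivity)
            apply mul_le_mul _ (le_trans Bcs Bts) (by positivity) (by positivity)
            exact mul_le_mul Bs Bas (by positivity) (by positivity)
        _ = 2^(β-α/2) * s^(-(d-α+β))
            * (r^(α-d) * (min 1 (a/r))^(α/2) * (min 1 (b/r))^(α/2)) := by ring
        _ ≤ 2^(d+2*β) * (s^(-(d-α+β)) + t^(-(d-α+β)))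
            * (r^(α-d) * (min 1 (a/r))^(α/2) * (min 1 (b/r))^(α/2)) := by
            apply mul_le_mul_of_nonneg_right _ (by positivity)
            have c2 : (2:ℝ)^(β-α/2) ≤ 2^(d+2*β) :=
              Real.rpow_le_rpow_of_exponent_le one_le_two (by linarith)
            have c3 : s^(-(d-α+β)) ≤ s^(-(d-α+β)) + t^(-(d-α+β)) := by
              have : (0:ℝ) ≤ t^(-(d-α+β)) := by positivity
              linarith
            exact mul_le_mul c2 c3 (by positivity) (by positivity)

/-- 3G-type inequality, case `α < 2β`. -/
theorem threeG_gh_case_lt (d : ℕ) (hd : 2 ≤ d) (α β : ℝ)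
    (hβ : 0 < β) (hβα : β < α) (hα : α < 2) (hcase : α < 2 * β) :
    ∃ C > 0, ∀ D : Set (EuclideanSpace ℝ (Fin d)), IsOpen D → Bornology.IsBounded D →
      ∀ x ∈ D, ∀ y ∈ D, ∀ z ∈ D, x ≠ y → x ≠ z → y ≠ z →
        gKer α D x z * hKer α β D z y ≤
          C * (‖x - z‖ ^ (-((d : ℝ) - α + β)) + ‖y - z‖ ^ (-((d : ℝ) - α + β))) *
            gKer α D x y := by
  have hα0 : 0 < α := lt_trans hβ hβα
  have hp2 : α / 2 ≠ 0 := by positivity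
  refine ⟨2^((d:ℝ)+2*β), by positivity, ?_⟩
  intro D hD hbdd x hx y hy z hz hxy hxz hyz
  have hr : (0:ℝ) < ‖x - y‖ := by
    rw [norm_pos_iff]; exact sub_ne_zero.mpr hxy
  have hs : (0:ℝ) < ‖x - z‖ := by
    rw [norm_pos_iff]; exact sub_ne_zero.mpr hxz
  have ht : (0:ℝ) < ‖z - y‖ := by
    rw [norm_pos_iff]; exact sub_ne_zero.mpr (Ne.symm hyz)
  have hyzzy : ‖y - z‖ = ‖z - y‖ := norm_sub_rev y z
  have hδ : ∀ w : EuclideanSpace ℝ (Fin d), 0 ≤ deltaD D w :=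
    fun w => Metric.infDist_nonneg
  have hk : hKer α β D z y = ‖z - y‖ ^ (α - β - (d:ℝ))
      * min 1 (deltaD D y / ‖z - y‖) ^ (α/2)
      * max 1 (‖z - y‖ / deltaD D z) ^ (β - α/2) := by
    rw [hKer, if_neg (by linarith), if_neg (by linarith)]
  have hmin0 : ∀ u : ℝ, min 1 ((0:ℝ)/u) = 0 := by
    intro u; rw [zero_div]; exact min_eq_right zero_le_one
  -- nonnegativity of the right-hand side
  have hgxy : 0 ≤ gKer α D x y := by
    rw [gKer]
    apply mul_nonneg (mul_nonneg (Real.rpow_nonneg (norm_nonneg _) _) _)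
      (Real.rpow_nonneg (le_min zero_le_one (div_nonneg (hδ _) (norm_nonneg _))) _)
    exact Real.rpow_nonneg (le_min zero_le_one (div_nonneg (hδ _) (norm_nonneg _))) _
  have hRHS : 0 ≤ 2^((d:ℝ)+2*β)
      * (‖x - z‖ ^ (-((d:ℝ) - α + β)) + ‖y - z‖ ^ (-((d:ℝ) - α + β))) * gKer α D x y := by
    apply mul_nonneg (mul_nonneg (Real.rpow_nonneg (by norm_num) _) _) hgxy
    exact add_nonneg (Real.rpow_nonneg (norm_nonneg _) _) (Real.rpow_nonneg (norm_nonneg _) _)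
  rcases eq_or_lt_of_le (hδ x) with h0 | hax
  · have hzero : gKer α D x z = 0 := by
      rw [gKer, ← h0, hmin0, Real.zero_rpow hp2, mul_zero, zero_mul]
    rw [hzero, zero_mul]; exact hRHS
  rcases eq_or_lt_of_le (hδ z) with h0 | hcz
  · have hzero : gKer α D x z = 0 := by
      rw [gKer, ← h0, hmin0, Real.zero_rpow hp2, mul_zero]
    rw [hzero, zero_mul]; exact hRHS
  rcases eq_or_lt_of_le (hδ y) with h0 | hby
  · have hzero : hKer α β D z y = 0 := by
      rw [hk, ← h0, hmin0, Real.zero_rpow hp2, mul_zero, zero_mul]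
    rw [hzero, mul_zero]; exact hRHS
  -- main case
  have tri1 : ‖x - y‖ ≤ ‖x - z‖ + ‖z - y‖ := by
    have h := dist_triangle x z y
    rwa [dist_eq_norm, dist_eq_norm, dist_eq_norm] at h
  have tri2 : ‖z - y‖ ≤ ‖x - y‖ + ‖x - z‖ := by
    have h := dist_triangle z x y
    rw [dist_eq_norm, dist_eq_norm, dist_eq_norm, norm_sub_rev z x] at h
    linarith
  have hcb : deltaD D z ≤ deltaD D y + ‖z - y‖ := by
    have h := Metric.infDist_le_infDist_add_dist (x := z) (y := y) (s := frontier D)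
    rwa [dist_eq_norm] at h
  rw [hk, gKer, gKer, hyzzy]
  exact key (by exact_mod_cast hd) hβ hβα hα hcase hr hs ht hax hby hcz tri1 tri2 hcb
end
end

section
/- Let d ≥ 2 and 0 < β < α < 2. Set γ := min(α−β, α/2) if α ≠ 2β, and γ := β/2 if α = 2β. Then there exists a constant c = c(d, α, β) > 0 such that for every ball B = B(x₀, r) ⊂ ℝ^d with 0 < r ≤ 1 and all distinct x, y ∈ B: ∫_B g_B(x,z)·h_B(z,y) dz ≤ c·r^{γ}·g_B(x,y). -/
open MeasureTheory Metric Set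

noncomputable section


-- ## auxiliary lemmas


/-- `min 1` is monotone -/
lemma min1_mono {a b : ℝ} (h : a ≤ b) : min 1 a ≤ min 1 b := min_le_min le_rfl h

lemma min1_nonneg {a : ℝ} (h : 0 ≤ a) : 0 ≤ min 1 a := le_min zero_le_one h

lemma min1_le_one {a : ℝ} : min 1 a ≤ 1 := min_le_left _ _

/-- `min 1 (c*u) ≤ c * min 1 u` for `c ≥ 1`. -/
lemma min1_mul_le {c u : ℝ} (hc : 1 ≤ c) (hu : 0 ≤ u) : min 1 (c * u) ≤ c * min 1 u := by
  rcases le_total 1 u with h | h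
  · calc min 1 (c*u) ≤ 1 := min_le_left _ _
    _ ≤ c * min 1 u := by rw [min_eq_left h]; simpa using hc
  · rw [min_eq_right h]
    rcases le_total 1 (c*u) with h2 | h2
    · rw [min_eq_left h2]; nlinarith
    · rw [min_eq_right h2]

/-- base form of L1 : `min 1 (a/t₁) ≤ min 1 (a/t₂) * max 1 (t₂/t₁)` -/
lemma min1_div_le_mul_max {a t₁ t₂ : ℝ} (ha : 0 ≤ a) (ht₁ : 0 ≤ t₁) (ht₂ : 0 < t₂) :
    min 1 (a / t₁) ≤ min 1 (a / t₂) * max 1 (t₂ / t₁) := by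
  rcases eq_or_lt_of_le ht₁ with h0 | h1
  · rw [← h0, div_zero]
    have : min 1 (0:ℝ) = 0 := by simp
    rw [this]
    positivity
  · rcases le_total t₂ t₁ with hle | hle
    · have hmax : (1:ℝ) ≤ max 1 (t₂/t₁) := le_max_left _ _
      have : min 1 (a/t₁) ≤ min 1 (a/t₂) := by
        apply min1_mono
        exact div_le_div_of_nonneg_left ha ht₂ hle
      calc min 1 (a/t₁) ≤ min 1 (a/t₂) := this
        _ = min 1 (a/t₂) * 1 := (mul_one _).symm
        _ ≤ min 1 (a/t₂) * max 1 (t₂/t₁) := by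
            apply mul_le_mul_of_nonneg_left hmax (min1_nonneg (by positivity))
    · have h21 : 1 ≤ t₂ / t₁ := (one_le_div h1).2 hle
      rw [max_eq_right h21]
      have key : min 1 (a/t₂) * (t₂/t₁) = min (t₂/t₁) (a/t₁) := by
        rw [min_mul_of_nonneg _ _ (by positivity : (0:ℝ) ≤ t₂/t₁), one_mul]
        congr 1
        field_simp
      rw [key]
      exact min_le_min h21 le_rfl |>.trans_eq rfl |>.trans (le_refl _) |>.trans (le_refl _)
      

/-- L1, rpow version. -/
lemma min1_rpow_le {a t₁ t₂ p : ℝ} (ha : 0 ≤ a) (ht₁ : 0 ≤ t₁) (ht₂ : 0 < t₂) (hp : 0 ≤ p) :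
    min 1 (a / t₁) ^ p ≤ min 1 (a / t₂) ^ p * max 1 (t₂ / t₁) ^ p := by
  rw [← Real.mul_rpow (min1_nonneg (by positivity)) (le_trans zero_le_one (le_max_left _ _))]
  exact Real.rpow_le_rpow (min1_nonneg (by positivity)) (min1_div_le_mul_max ha ht₁ ht₂) hp

/-- base form of Claim A. -/
lemma claimA_base {a U T : ℝ} (ha : 0 ≤ a) (hU : 0 ≤ U) (hT : 0 ≤ T) :
    min 1 (a / U) * max 1 (T / a) ≤ max 1 (T / U) := by
  rcases eq_or_lt_of_le ha with h0 | ha'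
  · rw [← h0]; simp
  rcases eq_or_lt_of_le hU with h0 | hU'
  · rw [← h0, div_zero]; simp
  rcases le_total T a with hTa | hTa
  · have : max 1 (T/a) = 1 := max_eq_left ((div_le_one ha').2 hTa)
    rw [this, mul_one]
    exact le_trans (min_le_left _ _) (le_max_left _ _)
  · have h1 : 1 ≤ T / a := (one_le_div ha').2 hTa
    rw [max_eq_right h1, mul_comm, mul_min_of_nonneg _ _ (by positivity : (0:ℝ) ≤ T/a), mul_one]
    have : T / a * (a / U) = T / U := by field_simp
    rw [this]
    exact min_le_of_right_le (le_max_right _ _)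

/-- Claim A, rpow version: `min 1 (a/U)^p * max 1 (T/a)^θ ≤ max 1 (T/U)^θ` for `0 ≤ θ ≤ p`. -/
lemma claimA {a U T p θ : ℝ} (ha : 0 ≤ a) (hU : 0 ≤ U) (hT : 0 ≤ T)
    (hθ : 0 ≤ θ) (hθp : θ ≤ p) :
    min 1 (a / U) ^ p * max 1 (T / a) ^ θ ≤ max 1 (T / U) ^ θ := by
  have hmin : (0:ℝ) ≤ min 1 (a/U) := min1_nonneg (by positivity)
  have h1 : min 1 (a/U) ^ p ≤ min 1 (a/U) ^ θ := by
    rcases eq_or_lt_of_le hmin with h0 | hpos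
    · rw [← h0]
      rcases eq_or_lt_of_le hθ with hθ0 | hθ0
      · rw [← hθ0, Real.rpow_zero]
        rcases eq_or_lt_of_le (hθ.trans hθp) with hp0 | hp0
        · rw [← hp0, Real.rpow_zero]
        · rw [Real.zero_rpow (ne_of_gt hp0)]; norm_num
      · rw [Real.zero_rpow (ne_of_gt hθ0), Real.zero_rpow (ne_of_gt (hθ0.trans_le hθp))]
    · exact Real.rpow_le_rpow_of_exponent_ge hpos (min_le_left _ _) hθp
  calc min 1 (a/U) ^ p * max 1 (T/a) ^ θ ≤ min 1 (a/U) ^ θ * max 1 (T/a) ^ θ := by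
        apply mul_le_mul_of_nonneg_right h1 (Real.rpow_nonneg (le_trans zero_le_one (le_max_left _ _)) _)
    _ = (min 1 (a/U) * max 1 (T/a)) ^ θ := (Real.mul_rpow hmin (le_trans zero_le_one (le_max_left _ _))).symm
    _ ≤ max 1 (T/U) ^ θ := Real.rpow_le_rpow (by positivity) (claimA_base ha hU hT) hθ

/-- log bound: `max 1 (log w) ≤ (2/β) * max 1 w ^ (β/2)` for `0 < β < 2`. -/
lemma log_le_aux {w β : ℝ} (hw0 : 0 ≤ w) (hβ : 0 < β) (hβ2 : β < 2) :
    max 1 (Real.log w) ≤ (2/β) * max 1 w ^ (β/2) := by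
  have h2β : (1:ℝ) < 2/β := (one_lt_div hβ).2 hβ2
  have hmax1 : (1:ℝ) ≤ max 1 w ^ (β/2) :=
    Real.one_le_rpow (le_max_left _ _) (by positivity)
  rcases le_total w 1 with hw | hw
  · rw [max_eq_left (le_trans (Real.log_nonpos hw0 hw) zero_le_one)]
    nlinarith
  · have hw0 : (0:ℝ) < w := lt_of_lt_of_le one_pos hw
    rw [max_eq_right hw]
    have hlog : Real.log w ≤ (2/β) * w ^ (β/2) := by
      have h1 : Real.log (w ^ (β/2)) ≤ w ^ (β/2) - 1 :=
        Real.log_le_sub_one_of_pos (Real.rpow_pos_of_pos hw0 _)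
      rw [Real.log_rpow hw0] at h1
      have h2 : Real.log w ≤ (2/β) * (w ^ (β/2) - 1) := by
        have := mul_le_mul_of_nonneg_left h1 (le_of_lt (by positivity : (0:ℝ) < 2/β))
        calc Real.log w = (2/β) * (β/2 * Real.log w) := by
              field_simp
          _ ≤ (2/β) * (w ^ (β/2) - 1) := this
      nlinarith [Real.rpow_pos_of_pos hw0 (β/2)]
    have hone : (1:ℝ) ≤ (2/β) * w ^ (β/2) := by
      have : (1:ℝ) ≤ w ^ (β/2) := Real.one_le_rpow hw (by positivity)
      nlinarith
    rw [max_le_iff]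
    exact ⟨hone, hlog⟩



variable {d : ℕ}

local notation "E" => EuclideanSpace ℝ (Fin d)

lemma euclid_nontrivial (hd : 1 ≤ d) : Nontrivial (EuclideanSpace ℝ (Fin d)) := by
  haveI : Nonempty (Fin d) := ⟨⟨0, by omega⟩⟩
  infer_instance

/-- Dyadic estimate: `∫_{ball w R} ‖z-w‖^(p-d) ≤ C R^p` for `0 < p < d`. -/
lemma lintegral_ball_rpow (hd : 1 ≤ d) {p : ℝ} (hp : 0 < p) (hpd : p < d) :
    ∃ C > 0, ∀ (w : EuclideanSpace ℝ (Fin d)) (R : ℝ), 0 < R →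
      ∫⁻ z in Metric.ball w R, ENNReal.ofReal (‖z - w‖ ^ (p - (d:ℝ))) ≤
        ENNReal.ofReal (C * R ^ p) := by
  haveI := euclid_nontrivial hd
  set V : ENNReal := volume (Metric.ball (0:E) 1) with hV
  have hV0 : 0 < V := measure_ball_pos _ _ one_pos
  have hVtop : V ≠ ⊤ := measure_ball_lt_top.ne
  set a : ℝ := (2:ℝ)⁻¹ with ha_def
  have ha0 : (0:ℝ) < a := by norm_num
  have ha1 : a < 1 := by norm_num
  set q : ℝ := a ^ p with hq_def
  have hq0 : 0 < q := Real.rpow_pos_of_pos ha0 _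
  have hq1 : q < 1 := Real.rpow_lt_one (le_of_lt ha0) ha1 hp
  have hq1' : (0:ℝ) < 1 - q := by linarith
  refine ⟨a ^ (p - (d:ℝ)) * (1 - q)⁻¹ * V.toReal, by
    have h1 : (0:ℝ) < a ^ (p - (d:ℝ)) := Real.rpow_pos_of_pos ha0 _
    have h2 : (0:ℝ) < V.toReal := ENNReal.toReal_pos (ne_of_gt hV0) hVtop
    positivity, ?_⟩
  intro w R hR
  set A : ℕ → Set E := fun k =>
    {z : E | R * a ^ (k+1) ≤ ‖z - w‖} ∩ Metric.ball w (R * a ^ k) with hA_def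
  have hAmeas : ∀ k, MeasurableSet (A k) := by
    intro k
    apply MeasurableSet.inter
    · exact measurableSet_le measurable_const (by fun_prop)
    · exact measurableSet_ball
  set c : ℕ → ENNReal := fun k => ENNReal.ofReal ((R * a ^ (k+1)) ^ (p - (d:ℝ))) with hc_def
  have hpoint : ∀ z : E, (Metric.ball w R).indicator
      (fun z => ENNReal.ofReal (‖z - w‖ ^ (p - (d:ℝ)))) z ≤
      ∑' k, (A k).indicator (fun _ => c k) z := by
    intro z
    by_cases hz : z ∈ Metric.ball w R
    · rw [Set.indicator_of_mem hz]
      have ht : ‖z - w‖ < R := by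
        rw [mem_ball, dist_eq_norm] at hz; exact hz
      by_cases ht0 : ‖z - w‖ = 0
      · rw [ht0, Real.zero_rpow (by intro h; rw [sub_eq_zero] at h; exact absurd h (by
          intro h'; rw [h'] at hpd; exact lt_irrefl _ hpd))]
        simp
      have htpos : 0 < ‖z - w‖ := lt_of_le_of_ne (norm_nonneg _) (Ne.symm ht0)
      -- find k
      have hex : ∃ n, R * a ^ (n+1) ≤ ‖z - w‖ := by
        obtain ⟨n, hn⟩ := pow_unbounded_of_one_lt (R / ‖z - w‖) (one_lt_two (α := ℝ))
        refine ⟨n, ?_⟩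
        have h2 : R < ‖z - w‖ * 2 ^ n := by
          rw [div_lt_iff₀ htpos] at hn; linarith [hn]
        have : R * a ^ (n+1) ≤ R * a ^ n := by
          apply mul_le_mul_of_nonneg_left (pow_le_pow_of_le_one (le_of_lt ha0) (le_of_lt ha1) (by omega)) (le_of_lt hR)
        refine this.trans ?_
        rw [ha_def, inv_pow]
        rw [mul_inv_le_iff₀ (by positivity)]
        nlinarith [hn, htpos]
      set k := Nat.find hex with hk_def
      have hk1 : R * a ^ (k+1) ≤ ‖z - w‖ := Nat.find_spec hex
      have hk2 : ‖z - w‖ < R * a ^ k := by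
        rcases Nat.eq_zero_or_pos k with h0 | h0
        · rw [h0, pow_zero, mul_one]; exact ht
        · obtain ⟨m, hm⟩ : ∃ m, k = m + 1 := ⟨k - 1, by omega⟩
          have := Nat.find_min hex (m := m) (by omega)
          rw [hm]; exact lt_of_not_ge this
      have hzA : z ∈ A k := ⟨hk1, by rw [mem_ball, dist_eq_norm]; exact hk2⟩
      have hle : ENNReal.ofReal (‖z - w‖ ^ (p - (d:ℝ))) ≤ c k := by
        apply ENNReal.ofReal_le_ofReal
        apply Real.rpow_le_rpow_of_nonpos (by positivity) hk1 (by linarith)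
      calc ENNReal.ofReal (‖z - w‖ ^ (p - (d:ℝ))) ≤ (A k).indicator (fun _ => c k) z := by
            rw [Set.indicator_of_mem hzA]; exact hle
        _ ≤ ∑' k, (A k).indicator (fun _ => c k) z := ENNReal.le_tsum k
    · rw [Set.indicator_of_notMem hz]; exact zero_le
  calc ∫⁻ z in Metric.ball w R, ENNReal.ofReal (‖z - w‖ ^ (p - (d:ℝ)))
      = ∫⁻ z, (Metric.ball w R).indicator (fun z => ENNReal.ofReal (‖z - w‖ ^ (p - (d:ℝ)))) z :=
        (lintegral_indicator measurableSet_ball _).symm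
    _ ≤ ∫⁻ z, ∑' k, (A k).indicator (fun _ => c k) z := lintegral_mono hpoint
    _ = ∑' k, ∫⁻ z, (A k).indicator (fun _ => c k) z := by
        apply lintegral_tsum
        intro k
        exact ((measurable_const).indicator (hAmeas k)).aemeasurable
    _ = ∑' k, c k * volume (A k) := by
        congr 1; funext k
        rw [lintegral_indicator (hAmeas k), setLIntegral_const]
    _ ≤ ∑' k, c k * (ENNReal.ofReal ((R * a ^ k) ^ d) * V) := by
        apply ENNReal.tsum_le_tsum
        intro k
        apply mul_le_mul_right
        calc volume (A k) ≤ volume (Metric.ball w (R * a ^ k)) := measure_mono Set.inter_subset_right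
          _ = ENNReal.ofReal ((R * a ^ k) ^ d) * V := by
              rw [Measure.addHaar_ball volume w (by positivity : (0:ℝ) ≤ R * a ^ k),
                finrank_euclideanSpace_fin]
    _ ≤ ENNReal.ofReal ((a ^ (p - (d:ℝ)) * (1 - q)⁻¹ * V.toReal) * R ^ p) := by
        -- first: real identity for each term
        have hterm : ∀ k : ℕ, c k * (ENNReal.ofReal ((R * a ^ k) ^ d) * V)
            = ENNReal.ofReal (R ^ p * a ^ (p - (d:ℝ)) * V.toReal) * ENNReal.ofReal q ^ k := by
          intro k
          have hreal : (R * a ^ (k+1)) ^ (p - (d:ℝ)) * (R * a ^ k) ^ (d:ℕ)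
              = (R ^ p * a ^ (p - (d:ℝ))) * q ^ k := by
            have hRa1 : (0:ℝ) < R * a ^ (k+1) := by positivity
            have e1 : (R * a ^ (k+1)) ^ (p - (d:ℝ))
                = R ^ (p - (d:ℝ)) * a ^ (((k:ℝ)+1) * (p - (d:ℝ))) := by
              rw [Real.mul_rpow (le_of_lt hR) (by positivity)]
              congr 1
              rw [← Real.rpow_natCast a (k+1), ← Real.rpow_mul (le_of_lt ha0)]
              push_cast
              ring_nf
            have e2 : ((R * a ^ k) ^ (d:ℕ) : ℝ) = R ^ ((d:ℕ):ℝ) * a ^ ((k:ℝ) * (d:ℝ)) := by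
              rw [← Real.rpow_natCast (R * a ^ k) d,
                Real.mul_rpow (le_of_lt hR) (by positivity)]
              congr 1
              rw [← Real.rpow_natCast a k, ← Real.rpow_mul (le_of_lt ha0)]
            rw [e1, e2]
            have e3 : (q : ℝ) ^ k = a ^ ((k:ℝ) * p) := by
              rw [hq_def, ← Real.rpow_natCast (a ^ p) k, ← Real.rpow_mul (le_of_lt ha0)]
              ring_nf
            rw [e3, mul_mul_mul_comm, ← Real.rpow_add hR, ← Real.rpow_add ha0,
              mul_assoc, ← Real.rpow_add ha0]
            have ea : (p - (d:ℝ)) + (d:ℝ) = p := by ring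
            have eb : ((k:ℝ)+1)*(p-(d:ℝ)) + (k:ℝ)*(d:ℝ) = (p-(d:ℝ)) + (k:ℝ)*p := by ring
            rw [ea, eb]
          rw [hc_def]
          conv_lhs => rw [← ENNReal.ofReal_toReal hVtop]
          rw [← ENNReal.ofReal_mul (by positivity), ← ENNReal.ofReal_mul (by positivity),
            ← ENNReal.ofReal_pow (le_of_lt hq0), ← ENNReal.ofReal_mul (by positivity)]
          apply congrArg
          calc (R * a ^ (k+1)) ^ (p - (d:ℝ)) * ((R * a ^ k) ^ (d:ℕ) * V.toReal)
              = ((R * a ^ (k+1)) ^ (p - (d:ℝ)) * (R * a ^ k) ^ (d:ℕ)) * V.toReal := by ring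
            _ = ((R ^ p * a ^ (p - (d:ℝ))) * q ^ k) * V.toReal := by rw [hreal]
            _ = R ^ p * a ^ (p - (d:ℝ)) * V.toReal * q ^ k := by ring
        calc (∑' k, c k * (ENNReal.ofReal ((R * a ^ k) ^ d) * V))
            = ∑' k, ENNReal.ofReal (R ^ p * a ^ (p - (d:ℝ)) * V.toReal) * ENNReal.ofReal q ^ k := by
              congr 1; funext k; exact hterm k
          _ = ENNReal.ofReal (R ^ p * a ^ (p - (d:ℝ)) * V.toReal) * (1 - ENNReal.ofReal q)⁻¹ := by
              rw [ENNReal.tsum_mul_left, ENNReal.tsum_geometric]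
          _ = ENNReal.ofReal (R ^ p * a ^ (p - (d:ℝ)) * V.toReal) * ENNReal.ofReal (1 - q)⁻¹ := by
              congr 1
              rw [ENNReal.ofReal_inv_of_pos hq1', ← ENNReal.ofReal_one, ENNReal.ofReal_sub _ (le_of_lt hq0), ENNReal.ofReal_one]
          _ = ENNReal.ofReal (R ^ p * a ^ (p - (d:ℝ)) * V.toReal * (1 - q)⁻¹) := by
              rw [← ENNReal.ofReal_mul (by positivity)]
          _ ≤ ENNReal.ofReal (a ^ (p - (d:ℝ)) * (1 - q)⁻¹ * V.toReal * R ^ p) := by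
              apply ENNReal.ofReal_le_ofReal; apply le_of_eq; ring

/-- Outward dyadic estimate: `∫_{‖z-w‖ ≥ S} ‖z-w‖^(m-d) ≤ C S^m` for `m < 0`. -/
lemma lintegral_compl_ball_rpow (hd : 1 ≤ d) {m : ℝ} (hm : m < 0) :
    ∃ C > 0, ∀ (w : EuclideanSpace ℝ (Fin d)) (S : ℝ), 0 < S →
      ∫⁻ z in {z : EuclideanSpace ℝ (Fin d) | S ≤ ‖z - w‖},
          ENNReal.ofReal (‖z - w‖ ^ (m - (d:ℝ))) ≤
        ENNReal.ofReal (C * S ^ m) := by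
  haveI := euclid_nontrivial hd
  set V : ENNReal := volume (Metric.ball (0:E) 1) with hV
  have hV0 : 0 < V := measure_ball_pos _ _ one_pos
  have hVtop : V ≠ ⊤ := measure_ball_lt_top.ne
  set q : ℝ := (2:ℝ) ^ m with hq_def
  have hq0 : 0 < q := Real.rpow_pos_of_pos two_pos _
  have hq1 : q < 1 := Real.rpow_lt_one_of_one_lt_of_neg one_lt_two hm
  have hq1' : (0:ℝ) < 1 - q := by linarith
  refine ⟨(2:ℝ) ^ ((d:ℝ)) * (1 - q)⁻¹ * V.toReal, by
    have h1 : (0:ℝ) < (2:ℝ) ^ ((d:ℝ)) := Real.rpow_pos_of_pos two_pos _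
    have h2 : (0:ℝ) < V.toReal := ENNReal.toReal_pos (ne_of_gt hV0) hVtop
    positivity, ?_⟩
  intro w S hS
  set A : ℕ → Set E := fun k =>
    {z : E | S * 2 ^ k ≤ ‖z - w‖} ∩ Metric.ball w (S * 2 ^ (k+1)) with hA_def
  have hAmeas : ∀ k, MeasurableSet (A k) := by
    intro k
    exact (measurableSet_le measurable_const (by fun_prop)).inter measurableSet_ball
  set c : ℕ → ENNReal := fun k => ENNReal.ofReal ((S * 2 ^ k) ^ (m - (d:ℝ))) with hc_def
  have hmd : m - (d:ℝ) ≤ 0 := by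
    have : (0:ℝ) ≤ d := Nat.cast_nonneg d
    linarith
  have hpoint : ∀ z : E, ({z : E | S ≤ ‖z - w‖}).indicator
      (fun z => ENNReal.ofReal (‖z - w‖ ^ (m - (d:ℝ)))) z ≤
      ∑' k, (A k).indicator (fun _ => c k) z := by
    intro z
    by_cases hz : z ∈ {z : E | S ≤ ‖z - w‖}
    · rw [Set.indicator_of_mem hz]
      have ht : S ≤ ‖z - w‖ := hz
      have htpos : 0 < ‖z - w‖ := lt_of_lt_of_le hS ht
      have hex : ∃ n, ‖z - w‖ < S * 2 ^ (n+1) := by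
        obtain ⟨n, hn⟩ := pow_unbounded_of_one_lt (‖z - w‖ / S) (one_lt_two (α := ℝ))
        refine ⟨n, ?_⟩
        rw [div_lt_iff₀ hS] at hn
        have h1 : (2:ℝ) ^ n ≤ 2 ^ (n+1) := by
          apply pow_le_pow_right₀ one_le_two (by omega)
        nlinarith
      set k := Nat.find hex with hk_def
      have hk1 : ‖z - w‖ < S * 2 ^ (k+1) := Nat.find_spec hex
      have hk2 : S * 2 ^ k ≤ ‖z - w‖ := by
        rcases Nat.eq_zero_or_pos k with h0 | h0
        · rw [h0, pow_zero, mul_one]; exact ht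
        · obtain ⟨n, hn⟩ : ∃ n, k = n + 1 := ⟨k - 1, by omega⟩
          have := Nat.find_min hex (m := n) (by omega)
          rw [hn]; exact le_of_not_gt this
      have hzA : z ∈ A k := ⟨hk2, by rw [mem_ball, dist_eq_norm]; exact hk1⟩
      have hle : ENNReal.ofReal (‖z - w‖ ^ (m - (d:ℝ))) ≤ c k := by
        apply ENNReal.ofReal_le_ofReal
        exact Real.rpow_le_rpow_of_nonpos (by positivity) hk2 hmd
      calc ENNReal.ofReal (‖z - w‖ ^ (m - (d:ℝ))) ≤ (A k).indicator (fun _ => c k) z := by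
            rw [Set.indicator_of_mem hzA]; exact hle
        _ ≤ ∑' k, (A k).indicator (fun _ => c k) z := ENNReal.le_tsum k
    · rw [Set.indicator_of_notMem hz]; exact zero_le
  have hregion : MeasurableSet {z : E | S ≤ ‖z - w‖} :=
    measurableSet_le measurable_const (by fun_prop)
  calc ∫⁻ z in {z : E | S ≤ ‖z - w‖}, ENNReal.ofReal (‖z - w‖ ^ (m - (d:ℝ)))
      = ∫⁻ z, ({z : E | S ≤ ‖z - w‖}).indicator
          (fun z => ENNReal.ofReal (‖z - w‖ ^ (m - (d:ℝ)))) z :=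
        (lintegral_indicator hregion _).symm
    _ ≤ ∫⁻ z, ∑' k, (A k).indicator (fun _ => c k) z := lintegral_mono hpoint
    _ = ∑' k, ∫⁻ z, (A k).indicator (fun _ => c k) z := by
        apply lintegral_tsum
        intro k
        exact ((measurable_const).indicator (hAmeas k)).aemeasurable
    _ = ∑' k, c k * volume (A k) := by
        congr 1; funext k
        rw [lintegral_indicator (hAmeas k), setLIntegral_const]
    _ ≤ ∑' k, c k * (ENNReal.ofReal ((S * 2 ^ (k+1)) ^ d) * V) := by
        apply ENNReal.tsum_le_tsum
        intro k
        apply mul_le_mul_right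
        calc volume (A k) ≤ volume (Metric.ball w (S * 2 ^ (k+1))) := measure_mono Set.inter_subset_right
          _ = ENNReal.ofReal ((S * 2 ^ (k+1)) ^ d) * V := by
              rw [Measure.addHaar_ball volume w (by positivity : (0:ℝ) ≤ S * 2 ^ (k+1)),
                finrank_euclideanSpace_fin]
    _ ≤ ENNReal.ofReal (((2:ℝ) ^ ((d:ℝ)) * (1 - q)⁻¹ * V.toReal) * S ^ m) := by
        have hterm : ∀ k : ℕ, c k * (ENNReal.ofReal ((S * 2 ^ (k+1)) ^ d) * V)
            = ENNReal.ofReal (S ^ m * (2:ℝ) ^ ((d:ℝ)) * V.toReal) * ENNReal.ofReal q ^ k := by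
          intro k
          have hreal : (S * 2 ^ k) ^ (m - (d:ℝ)) * ((S * 2 ^ (k+1)) ^ (d:ℕ) : ℝ)
              = (S ^ m * (2:ℝ) ^ ((d:ℝ))) * q ^ k := by
            have e1 : (S * 2 ^ k) ^ (m - (d:ℝ))
                = S ^ (m - (d:ℝ)) * (2:ℝ) ^ ((k:ℝ) * (m - (d:ℝ))) := by
              rw [Real.mul_rpow (le_of_lt hS) (by positivity)]
              congr 1
              rw [← Real.rpow_natCast (2:ℝ) k, ← Real.rpow_mul (by norm_num)]
            have e2 : ((S * 2 ^ (k+1)) ^ (d:ℕ) : ℝ) = S ^ ((d:ℕ):ℝ) * (2:ℝ) ^ (((k:ℝ)+1) * (d:ℝ)) := by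
              rw [← Real.rpow_natCast (S * 2 ^ (k+1)) d,
                Real.mul_rpow (le_of_lt hS) (by positivity)]
              congr 1
              rw [← Real.rpow_natCast (2:ℝ) (k+1), ← Real.rpow_mul (by norm_num)]
              push_cast
              ring_nf
            have e3 : (q : ℝ) ^ k = (2:ℝ) ^ ((k:ℝ) * m) := by
              rw [hq_def, ← Real.rpow_natCast ((2:ℝ) ^ m) k, ← Real.rpow_mul (by norm_num)]
              ring_nf
            rw [e1, e2, e3, mul_mul_mul_comm, ← Real.rpow_add hS, mul_assoc,
              ← Real.rpow_add (by norm_num : (0:ℝ) < 2), ← Real.rpow_add (by norm_num : (0:ℝ) < 2)]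
            have ea : (m - (d:ℝ)) + (d:ℝ) = m := by ring
            have eb : (k:ℝ) * (m - (d:ℝ)) + ((k:ℝ)+1) * (d:ℝ) = (d:ℝ) + (k:ℝ) * m := by ring
            rw [ea, eb]
          rw [hc_def]
          conv_lhs => rw [← ENNReal.ofReal_toReal hVtop]
          rw [← ENNReal.ofReal_mul (by positivity), ← ENNReal.ofReal_mul (by positivity),
            ← ENNReal.ofReal_pow (le_of_lt hq0), ← ENNReal.ofReal_mul (by positivity)]
          apply congrArg
          calc (S * 2 ^ k) ^ (m - (d:ℝ)) * ((S * 2 ^ (k+1)) ^ (d:ℕ) * V.toReal)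
              = ((S * 2 ^ k) ^ (m - (d:ℝ)) * (S * 2 ^ (k+1)) ^ (d:ℕ)) * V.toReal := by ring
            _ = ((S ^ m * (2:ℝ) ^ ((d:ℝ))) * q ^ k) * V.toReal := by rw [hreal]
            _ = S ^ m * (2:ℝ) ^ ((d:ℝ)) * V.toReal * q ^ k := by ring
        calc (∑' k, c k * (ENNReal.ofReal ((S * 2 ^ (k+1)) ^ d) * V))
            = ∑' k, ENNReal.ofReal (S ^ m * (2:ℝ) ^ ((d:ℝ)) * V.toReal) * ENNReal.ofReal q ^ k := by
              congr 1; funext k; exact hterm k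
          _ = ENNReal.ofReal (S ^ m * (2:ℝ) ^ ((d:ℝ)) * V.toReal) * (1 - ENNReal.ofReal q)⁻¹ := by
              rw [ENNReal.tsum_mul_left, ENNReal.tsum_geometric]
          _ = ENNReal.ofReal (S ^ m * (2:ℝ) ^ ((d:ℝ)) * V.toReal) * ENNReal.ofReal (1 - q)⁻¹ := by
              congr 1
              rw [ENNReal.ofReal_inv_of_pos hq1', ← ENNReal.ofReal_one,
                ENNReal.ofReal_sub _ (le_of_lt hq0), ENNReal.ofReal_one]
          _ = ENNReal.ofReal (S ^ m * (2:ℝ) ^ ((d:ℝ)) * V.toReal * (1 - q)⁻¹) := by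
              rw [← ENNReal.ofReal_mul (by positivity)]
          _ ≤ ENNReal.ofReal ((2:ℝ) ^ ((d:ℝ)) * (1 - q)⁻¹ * V.toReal * S ^ m) := by
              apply ENNReal.ofReal_le_ofReal; apply le_of_eq; ring

lemma div_rpow_eq {x y c : ℝ} (hx : 0 ≤ x) (hy : 0 ≤ y) : (x/y)^c = x^c * y^(-c) := by
  rw [Real.div_rpow hx hy, Real.rpow_neg hy, div_eq_mul_inv]

/-- Region 1 pointwise bound (z near x). -/
lemma pt1 {α β θ D s U T δx δy δz : ℝ}
    (hα0 : 0 < α) (hα2 : α < 2) (hβ0 : 0 < β) (hβα : β < α) (hD : 2 ≤ D)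
    (hθ0 : 0 ≤ θ) (hθ : θ < α/2)
    (hs : 0 < s) (hU0 : 0 ≤ U) (hUs : U < s/2) (hT1 : s - U ≤ T) (hT2 : T ≤ s + U)
    (hδx : 0 ≤ δx) (hδy : 0 ≤ δy) (hδz : 0 ≤ δz) :
    U ^ (α - D) * min 1 (δx/U) ^ (α/2) * min 1 (δz/U) ^ (α/2) *
      (T ^ (α - β - D) * min 1 (δy/T) ^ (α/2) * max 1 (T/δz) ^ θ)
    ≤ (2 ^ (D + β - α) * (3/2) ^ θ * 2 ^ (α/2)) *
        (min 1 (δx/s) ^ (α/2) * min 1 (δy/s) ^ (α/2)) * s ^ (α - β - D + θ + α/2)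
        * U ^ (α/2 - θ - D) := by
  have hAD : α - D ≠ 0 := by intro h; rw [sub_eq_zero] at h; linarith
  rcases eq_or_lt_of_le hU0 with hU | hU
  · rw [← hU, Real.zero_rpow hAD,
      Real.zero_rpow (by intro h; rw [sub_eq_zero] at h; linarith : α/2 - θ - D ≠ 0)]
    simp only [zero_mul, mul_zero]
    exact le_refl 0
  have hThalf : s/2 < T := by linarith
  have hT0 : 0 < T := by linarith
  have F2 : T ^ (α - β - D) ≤ 2 ^ (D + β - α) * s ^ (α - β - D) := by
    have h1 : ((s/2:ℝ)) ^ (α - β - D) = s ^ (α - β - D) * 2 ^ (-(α - β - D)) :=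
      div_rpow_eq (le_of_lt hs) (by norm_num)
    calc T ^ (α - β - D) ≤ (s/2) ^ (α - β - D) :=
          Real.rpow_le_rpow_of_nonpos (by linarith) (le_of_lt hThalf) (by linarith)
      _ = 2 ^ (D + β - α) * s ^ (α - β - D) := by rw [h1]; ring_nf
  have F3 : min 1 (δx/U) ^ (α/2) ≤ min 1 (δx/s) ^ (α/2) * (s ^ (α/2) * U ^ (-(α/2))) := by
    have h1 := min1_rpow_le hδx hU0 hs (by positivity : (0:ℝ) ≤ α/2)
    have h2 : max 1 (s/U) = s/U := max_eq_right (by rw [le_div_iff₀ hU]; linarith)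
    rw [h2, div_rpow_eq (le_of_lt hs) hU0] at h1
    exact h1
  have F4 : min 1 (δy/T) ^ (α/2) ≤ 2 ^ (α/2) * min 1 (δy/s) ^ (α/2) := by
    have h1 : δy / T ≤ 2 * (δy / s) := by
      rw [← mul_div_assoc, div_le_div_iff₀ hT0 hs]
      nlinarith
    calc min 1 (δy/T) ^ (α/2) ≤ min 1 (2 * (δy/s)) ^ (α/2) := by
          apply Real.rpow_le_rpow (min1_nonneg (by positivity)) (min1_mono h1) (by positivity)
      _ ≤ (2 * min 1 (δy/s)) ^ (α/2) := by
          apply Real.rpow_le_rpow (min1_nonneg (by positivity))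
            (min1_mul_le one_le_two (by positivity)) (by positivity)
      _ = 2 ^ (α/2) * min 1 (δy/s) ^ (α/2) := by
          rw [Real.mul_rpow (by norm_num) (min1_nonneg (by positivity))]
  have F5 : min 1 (δz/U) ^ (α/2) * max 1 (T/δz) ^ θ ≤ (3/2) ^ θ * (s ^ θ * U ^ (-θ)) := by
    have h1 := claimA hδz hU0 (le_of_lt hT0) hθ0 (le_of_lt hθ)
    have h2 : max 1 (T/U) ≤ 3/2 * s / U := by
      apply max_le
      · rw [le_div_iff₀ hU]; nlinarith
      · gcongr
        linarith

    calc min 1 (δz/U) ^ (α/2) * max 1 (T/δz) ^ θ ≤ max 1 (T/U) ^ θ := h1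
      _ ≤ (3/2 * s / U) ^ θ :=
          Real.rpow_le_rpow (le_trans zero_le_one (le_max_left _ _)) h2 hθ0
      _ = (3/2) ^ θ * (s ^ θ * U ^ (-θ)) := by
          rw [mul_div_assoc, Real.mul_rpow (by norm_num) (by positivity),
            div_rpow_eq (le_of_lt hs) hU0]
  -- assemble
  have key : U ^ (α - D) * min 1 (δx/U) ^ (α/2) * min 1 (δz/U) ^ (α/2) *
      (T ^ (α - β - D) * min 1 (δy/T) ^ (α/2) * max 1 (T/δz) ^ θ)
      ≤ U ^ (α - D) * (min 1 (δx/s) ^ (α/2) * (s ^ (α/2) * U ^ (-(α/2)))) *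
        ((3/2) ^ θ * (s ^ θ * U ^ (-θ))) *
        ((2 ^ (D + β - α) * s ^ (α - β - D)) * (2 ^ (α/2) * min 1 (δy/s) ^ (α/2))) := by
    have e1 : U ^ (α - D) * min 1 (δx/U) ^ (α/2) * min 1 (δz/U) ^ (α/2) *
        (T ^ (α - β - D) * min 1 (δy/T) ^ (α/2) * max 1 (T/δz) ^ θ)
        = U ^ (α - D) * (min 1 (δx/U) ^ (α/2)) *
          (min 1 (δz/U) ^ (α/2) * max 1 (T/δz) ^ θ) *
          (T ^ (α - β - D) * min 1 (δy/T) ^ (α/2)) := by ring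
    rw [e1]
    have hn1 : (0:ℝ) ≤ U ^ (α - D) := Real.rpow_nonneg hU0 _
    have hn2 : (0:ℝ) ≤ min 1 (δx/U) ^ (α/2) := Real.rpow_nonneg (min1_nonneg (by positivity)) _
    have hn3 : (0:ℝ) ≤ min 1 (δz/U) ^ (α/2) * max 1 (T/δz) ^ θ := by
      apply mul_nonneg (Real.rpow_nonneg (min1_nonneg (by positivity)) _)
        (Real.rpow_nonneg (le_trans zero_le_one (le_max_left _ _)) _)
    have hn4 : (0:ℝ) ≤ T ^ (α - β - D) * min 1 (δy/T) ^ (α/2) := by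
      apply mul_nonneg (Real.rpow_nonneg (le_of_lt hT0) _)
        (Real.rpow_nonneg (min1_nonneg (by positivity)) _)
    apply mul_le_mul
    · apply mul_le_mul
      · exact mul_le_mul_of_nonneg_left F3 hn1
      · exact F5
      · exact hn3
      · positivity
    · calc T ^ (α - β - D) * min 1 (δy/T) ^ (α/2)
          ≤ (2 ^ (D + β - α) * s ^ (α - β - D)) * min 1 (δy/T) ^ (α/2) := by
            apply mul_le_mul_of_nonneg_right F2
              (Real.rpow_nonneg (min1_nonneg (by positivity)) _)
        _ ≤ (2 ^ (D + β - α) * s ^ (α - β - D)) * (2 ^ (α/2) * min 1 (δy/s) ^ (α/2)) := by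
            apply mul_le_mul_of_nonneg_left F4 (by positivity)
    · exact hn4
    · positivity
  refine key.trans (le_of_eq ?_)
  have eU : U ^ (α - D) * U ^ (-(α/2)) * U ^ (-θ) = U ^ (α/2 - θ - D) := by
    rw [← Real.rpow_add hU, ← Real.rpow_add hU]; congr 1; ring
  have eS : s ^ (α/2) * s ^ θ * s ^ (α - β - D) = s ^ (α - β - D + θ + α/2) := by
    rw [← Real.rpow_add hs, ← Real.rpow_add hs]; congr 1; ring
  calc U ^ (α - D) * (min 1 (δx/s) ^ (α/2) * (s ^ (α/2) * U ^ (-(α/2)))) *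
        ((3/2) ^ θ * (s ^ θ * U ^ (-θ))) *
        ((2 ^ (D + β - α) * s ^ (α - β - D)) * (2 ^ (α/2) * min 1 (δy/s) ^ (α/2)))
      = (2 ^ (D + β - α) * (3/2) ^ θ * 2 ^ (α/2)) *
        (min 1 (δx/s) ^ (α/2) * min 1 (δy/s) ^ (α/2)) *
        (s ^ (α/2) * s ^ θ * s ^ (α - β - D)) *
        (U ^ (α - D) * U ^ (-(α/2)) * U ^ (-θ)) := by
        ring_nf
    _ = _ := by rw [eU, eS]
  
/-- key boundary-factor bound in region 2 -/
lemma pt2_key {α θ s U T δy δz : ℝ}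
    (hα0 : 0 < α) (hθ0 : 0 ≤ θ) (hθ : θ ≤ α/2)
    (hs : 0 < s) (hTs : T < s/2) (hT0 : 0 ≤ T) (hU : s/2 < U)
    (hδy : 0 ≤ δy) (hδz : 0 ≤ δz) (hzy : δz ≤ δy + T) (hyz : δy ≤ δz + T) :
    min 1 (δz/U) ^ (α/2) * max 1 (T/δz) ^ θ * min 1 (δy/T) ^ (α/2)
      ≤ 6 ^ (α/2) * min 1 (δy/s) ^ (α/2) := by
  have hU0 : (0:ℝ) < U := by linarith
  have h6 : (0:ℝ) ≤ 6 ^ (α/2) := Real.rpow_nonneg (by norm_num) _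
  have hmys : (0:ℝ) ≤ min 1 (δy/s) := min1_nonneg (by positivity)
  rcases le_or_gt (2*T) δy with h2T | h2T
  · -- case (a) : 2T ≤ δy,  δz ≥ T
    have hδzT : T ≤ δz := by linarith
    have hM : max 1 (T/δz) = 1 := by
      rcases eq_or_lt_of_le (hT0.trans hδzT) with h0 | h0
      · rw [← h0]; simp [div_zero]  -- δz = 0 forces T = 0
      · exact max_eq_left ((div_le_one h0).2 hδzT)
    have hAy : min 1 (δy/T) ^ (α/2) ≤ 1 :=
      Real.rpow_le_one (min1_nonneg (by positivity)) (min_le_left _ _) (by positivity)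
    have hAz : min 1 (δz/U) ^ (α/2) ≤ 3 ^ (α/2) * min 1 (δy/s) ^ (α/2) := by
      have h1 : δz/U ≤ 3 * (δy/s) := by
        rw [← mul_div_assoc, div_le_div_iff₀ hU0 hs]
        nlinarith
      calc min 1 (δz/U) ^ (α/2) ≤ min 1 (3 * (δy/s)) ^ (α/2) :=
            Real.rpow_le_rpow (min1_nonneg (by positivity)) (min1_mono h1) (by positivity)
        _ ≤ (3 * min 1 (δy/s)) ^ (α/2) :=
            Real.rpow_le_rpow (min1_nonneg (by positivity))
              (min1_mul_le (by norm_num) (by positivity)) (by positivity)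
        _ = 3 ^ (α/2) * min 1 (δy/s) ^ (α/2) := Real.mul_rpow (by norm_num) hmys
    calc min 1 (δz/U) ^ (α/2) * max 1 (T/δz) ^ θ * min 1 (δy/T) ^ (α/2)
        = min 1 (δz/U) ^ (α/2) * min 1 (δy/T) ^ (α/2) := by rw [hM, Real.one_rpow, mul_one]
      _ ≤ (3 ^ (α/2) * min 1 (δy/s) ^ (α/2)) * 1 := by
          apply mul_le_mul hAz hAy (Real.rpow_nonneg (min1_nonneg (by positivity)) _) (by positivity)
      _ ≤ 6 ^ (α/2) * min 1 (δy/s) ^ (α/2) := by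
          rw [mul_one]
          apply mul_le_mul_of_nonneg_right _ (Real.rpow_nonneg hmys _)
          exact Real.rpow_le_rpow (by norm_num) (by norm_num) (by positivity)
  · -- case (b) : δy < 2T  (hence T > 0 unless δy<0)
    have hT0' : 0 < T := by nlinarith
    have hAy : min 1 (δy/T) ^ (α/2) ≤ (δy/T) ^ (α/2) :=
      Real.rpow_le_rpow (min1_nonneg (by positivity)) (min_le_right _ _) (by positivity)
    have hAzM : min 1 (δz/U) ^ (α/2) * max 1 (T/δz) ^ θ ≤ (6*T/s) ^ (α/2) := by
      rcases le_or_gt δz T with hzT | hzT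
      · -- δz ≤ T
        rcases eq_or_lt_of_le hδz with h0 | h0
        · rw [← h0, zero_div]
          have : min 1 (0:ℝ) = 0 := by simp
          rw [this, Real.zero_rpow (by positivity : α/2 ≠ 0), zero_mul]
          positivity
        · have hM : max 1 (T/δz) = T/δz := max_eq_right ((one_le_div h0).2 hzT)
          have hAz : min 1 (δz/U) ^ (α/2) ≤ (δz/U) ^ (α/2) :=
            Real.rpow_le_rpow (min1_nonneg (by positivity)) (min_le_right _ _) (by positivity)
          calc min 1 (δz/U) ^ (α/2) * max 1 (T/δz) ^ θ
              ≤ (δz/U) ^ (α/2) * (T/δz) ^ θ := by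
                rw [hM]
                apply mul_le_mul_of_nonneg_right hAz (Real.rpow_nonneg (by positivity) _)
            _ = δz ^ (α/2 - θ) * T ^ θ * U ^ (-(α/2)) := by
                rw [div_rpow_eq (le_of_lt h0) hU0.le, div_rpow_eq hT0'.le (le_of_lt h0)]
                rw [show α/2 - θ = α/2 + -θ by ring, Real.rpow_add h0]
                ring
            _ ≤ T ^ (α/2 - θ) * T ^ θ * U ^ (-(α/2)) := by
                apply mul_le_mul_of_nonneg_right _ (Real.rpow_nonneg hU0.le _)
                apply mul_le_mul_of_nonneg_right _ (Real.rpow_nonneg hT0'.le _)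
                exact Real.rpow_le_rpow (le_of_lt h0) hzT (by linarith)
            _ = (T/U) ^ (α/2) := by
                rw [div_rpow_eq hT0'.le hU0.le, ← Real.rpow_add hT0']
                ring_nf
            _ ≤ (6*T/s) ^ (α/2) := by
                apply Real.rpow_le_rpow (by positivity) _ (by positivity)
                rw [div_le_div_iff₀ hU0 hs]
                nlinarith
      · -- δz > T : max = 1
        have hM : max 1 (T/δz) = 1 := max_eq_left ((div_le_one (by linarith)).2 (le_of_lt hzT))
        rw [hM, Real.one_rpow, mul_one]
        calc min 1 (δz/U) ^ (α/2) ≤ (δz/U) ^ (α/2) :=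
              Real.rpow_le_rpow (min1_nonneg (by positivity)) (min_le_right _ _) (by positivity)
          _ ≤ (6*T/s) ^ (α/2) := by
              apply Real.rpow_le_rpow (by positivity) _ (by positivity)
              rw [div_le_div_iff₀ hU0 hs]
              nlinarith
    have hδys : δy/s ≤ 1 := by
      rw [div_le_one hs]; linarith
    calc min 1 (δz/U) ^ (α/2) * max 1 (T/δz) ^ θ * min 1 (δy/T) ^ (α/2)
        ≤ (6*T/s) ^ (α/2) * (δy/T) ^ (α/2) := by
          apply mul_le_mul hAzM hAy (Real.rpow_nonneg (min1_nonneg (by positivity)) _) (by positivity)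
      _ = (6 * (δy/s)) ^ (α/2) := by
          rw [← Real.mul_rpow (by positivity) (by positivity)]
          congr 1
          field_simp
      _ = 6 ^ (α/2) * (δy/s) ^ (α/2) := Real.mul_rpow (by norm_num) (by positivity)
      _ = 6 ^ (α/2) * min 1 (δy/s) ^ (α/2) := by rw [min_eq_right hδys]

/-- Region 2 pointwise bound (z near y). -/
lemma pt2 {α β θ D s U T δx δy δz : ℝ}
    (hα0 : 0 < α) (hα2 : α < 2) (hβ0 : 0 < β) (hβα : β < α) (hD : 2 ≤ D)
    (hθ0 : 0 ≤ θ) (hθ : θ ≤ α/2)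
    (hs : 0 < s) (hT0 : 0 ≤ T) (hTs : T < s/2) (hU1 : s - T ≤ U)
    (hδx : 0 ≤ δx) (hδy : 0 ≤ δy) (hδz : 0 ≤ δz) (hzy : δz ≤ δy + T) (hyz : δy ≤ δz + T) :
    U ^ (α - D) * min 1 (δx/U) ^ (α/2) * min 1 (δz/U) ^ (α/2) *
      (T ^ (α - β - D) * min 1 (δy/T) ^ (α/2) * max 1 (T/δz) ^ θ)
    ≤ (2 ^ (D - α) * 2 ^ (α/2) * 6 ^ (α/2)) *
        (min 1 (δx/s) ^ (α/2) * min 1 (δy/s) ^ (α/2)) * s ^ (α - D) * T ^ (α - β - D) := by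
  have hU : s/2 < U := by linarith
  have hU0 : (0:ℝ) < U := by linarith
  have F1 : U ^ (α - D) ≤ 2 ^ (D - α) * s ^ (α - D) := by
    have h1 : ((s/2:ℝ)) ^ (α - D) = s ^ (α - D) * 2 ^ (-(α - D)) :=
      div_rpow_eq (le_of_lt hs) (by norm_num)
    calc U ^ (α - D) ≤ (s/2) ^ (α - D) :=
          Real.rpow_le_rpow_of_nonpos (by linarith) (le_of_lt hU) (by linarith)
      _ = 2 ^ (D - α) * s ^ (α - D) := by rw [h1]; ring_nf
  have F2 : min 1 (δx/U) ^ (α/2) ≤ min 1 (δx/s) ^ (α/2) * 2 ^ (α/2) := by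
    have h1 := min1_rpow_le hδx hU0.le hs (by positivity : (0:ℝ) ≤ α/2)
    have h2 : max 1 (s/U) ≤ 2 := by
      apply max_le (by norm_num)
      rw [div_le_iff₀ hU0]; linarith
    calc min 1 (δx/U) ^ (α/2) ≤ min 1 (δx/s) ^ (α/2) * max 1 (s/U) ^ (α/2) := h1
      _ ≤ min 1 (δx/s) ^ (α/2) * 2 ^ (α/2) := by
          apply mul_le_mul_of_nonneg_left
            (Real.rpow_le_rpow (le_trans zero_le_one (le_max_left _ _)) h2 (by positivity))
            (Real.rpow_nonneg (min1_nonneg (by positivity)) _)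
  have F3 := pt2_key hα0 hθ0 hθ hs hTs hT0 hU hδy hδz hzy hyz
  have e1 : U ^ (α - D) * min 1 (δx/U) ^ (α/2) * min 1 (δz/U) ^ (α/2) *
      (T ^ (α - β - D) * min 1 (δy/T) ^ (α/2) * max 1 (T/δz) ^ θ)
      = U ^ (α - D) * (min 1 (δx/U) ^ (α/2)) *
        (min 1 (δz/U) ^ (α/2) * max 1 (T/δz) ^ θ * min 1 (δy/T) ^ (α/2)) *
        T ^ (α - β - D) := by ring
  rw [e1]
  have hn4 : (0:ℝ) ≤ T ^ (α - β - D) := Real.rpow_nonneg hT0 _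
  have key : U ^ (α - D) * (min 1 (δx/U) ^ (α/2)) *
        (min 1 (δz/U) ^ (α/2) * max 1 (T/δz) ^ θ * min 1 (δy/T) ^ (α/2))
      ≤ (2 ^ (D - α) * s ^ (α - D)) * (min 1 (δx/s) ^ (α/2) * 2 ^ (α/2)) *
        (6 ^ (α/2) * min 1 (δy/s) ^ (α/2)) := by
    apply mul_le_mul _ F3
    · apply mul_nonneg
      · apply mul_nonneg (Real.rpow_nonneg (min1_nonneg (by positivity)) _)
          (Real.rpow_nonneg (le_trans zero_le_one (le_max_left _ _)) _)
      · exact Real.rpow_nonneg (min1_nonneg (by positivity)) _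
    · positivity
    · exact mul_le_mul F1 F2 (Real.rpow_nonneg (min1_nonneg (by positivity)) _) (by positivity)
  calc U ^ (α - D) * (min 1 (δx/U) ^ (α/2)) *
        (min 1 (δz/U) ^ (α/2) * max 1 (T/δz) ^ θ * min 1 (δy/T) ^ (α/2)) * T ^ (α - β - D)
      ≤ ((2 ^ (D - α) * s ^ (α - D)) * (min 1 (δx/s) ^ (α/2) * 2 ^ (α/2)) *
        (6 ^ (α/2) * min 1 (δy/s) ^ (α/2))) * T ^ (α - β - D) :=
        mul_le_mul_of_nonneg_right key hn4
    _ = (2 ^ (D - α) * 2 ^ (α/2) * 6 ^ (α/2)) *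
        (min 1 (δx/s) ^ (α/2) * min 1 (δy/s) ^ (α/2)) * s ^ (α - D) * T ^ (α - β - D) := by
        ring

/-- Region 3 pointwise bound. -/
lemma pt3 {α β θ D s U T δx δy δz : ℝ}
    (hα0 : 0 < α) (hα2 : α < 2) (hβ0 : 0 < β) (hβα : β < α) (hD : 2 ≤ D)
    (hθ0 : 0 ≤ θ) (hθ : θ ≤ α/2) (hθβ : θ ≤ β)
    (hs : 0 < s) (hU : s/2 ≤ U) (hT : s/2 ≤ T)
    (hδx : 0 ≤ δx) (hδy : 0 ≤ δy) (hδz : 0 ≤ δz) :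
    U ^ (α - D) * min 1 (δx/U) ^ (α/2) * min 1 (δz/U) ^ (α/2) *
      (T ^ (α - β - D) * min 1 (δy/T) ^ (α/2) * max 1 (T/δz) ^ θ)
    ≤ (2 ^ (α/2) * 2 ^ (α/2)) * (min 1 (δx/s) ^ (α/2) * min 1 (δy/s) ^ (α/2)) *
        (U ^ (2*α - β - 2*D) + T ^ (2*α - β - 2*D)) := by
  have hU0 : (0:ℝ) < U := by linarith
  have hT0 : (0:ℝ) < T := by linarith
  have F2 : min 1 (δx/U) ^ (α/2) ≤ min 1 (δx/s) ^ (α/2) * 2 ^ (α/2) := by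
    have h1 := min1_rpow_le hδx hU0.le hs (by positivity : (0:ℝ) ≤ α/2)
    have h2 : max 1 (s/U) ≤ 2 := by
      apply max_le (by norm_num)
      rw [div_le_iff₀ hU0]; linarith
    refine h1.trans (mul_le_mul_of_nonneg_left
      (Real.rpow_le_rpow (le_trans zero_le_one (le_max_left _ _)) h2 (by positivity))
      (Real.rpow_nonneg (min1_nonneg (by positivity)) _))
  have F4 : min 1 (δy/T) ^ (α/2) ≤ min 1 (δy/s) ^ (α/2) * 2 ^ (α/2) := by
    have h1 := min1_rpow_le hδy hT0.le hs (by positivity : (0:ℝ) ≤ α/2)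
    have h2 : max 1 (s/T) ≤ 2 := by
      apply max_le (by norm_num)
      rw [div_le_iff₀ hT0]; linarith
    refine h1.trans (mul_le_mul_of_nonneg_left
      (Real.rpow_le_rpow (le_trans zero_le_one (le_max_left _ _)) h2 (by positivity))
      (Real.rpow_nonneg (min1_nonneg (by positivity)) _))
  have F5 : min 1 (δz/U) ^ (α/2) * max 1 (T/δz) ^ θ ≤ max 1 (T/U) ^ θ :=
    claimA hδz hU0.le hT0.le hθ0 hθ
  have core : U ^ (α - D) * T ^ (α - β - D) * max 1 (T/U) ^ θ
      ≤ U ^ (2*α - β - 2*D) + T ^ (2*α - β - 2*D) := by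
    rcases le_or_gt T U with hTU | hTU
    · have hM : max 1 (T/U) = 1 := max_eq_left ((div_le_one hU0).2 hTU)
      rw [hM, Real.one_rpow, mul_one]
      calc U ^ (α - D) * T ^ (α - β - D) ≤ T ^ (α - D) * T ^ (α - β - D) := by
            apply mul_le_mul_of_nonneg_right
              (Real.rpow_le_rpow_of_nonpos hT0 hTU (by linarith))
              (Real.rpow_nonneg hT0.le _)
        _ = T ^ (2*α - β - 2*D) := by
            rw [← Real.rpow_add hT0]; congr 1; ring
        _ ≤ U ^ (2*α - β - 2*D) + T ^ (2*α - β - 2*D) := by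
            have : (0:ℝ) ≤ U ^ (2*α - β - 2*D) := Real.rpow_nonneg hU0.le _
            linarith
    · have hM : max 1 (T/U) = T/U := max_eq_right ((one_le_div hU0).2 hTU.le)
      rw [hM]
      have e1 : U ^ (α - D) * T ^ (α - β - D) * (T/U) ^ θ
          = U ^ (α - θ - D) * T ^ (α - β + θ - D) := by
        rw [div_rpow_eq hT0.le hU0.le]
        have eT : T ^ (α - β - D) * T ^ θ = T ^ (α - β + θ - D) := by
          rw [← Real.rpow_add hT0]; congr 1; ring
        have eU : U ^ (α - D) * U ^ (-θ) = U ^ (α - θ - D) := by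
          rw [← Real.rpow_add hU0]; congr 1; ring
        calc U ^ (α - D) * T ^ (α - β - D) * (T ^ θ * U ^ (-θ))
            = (U ^ (α - D) * U ^ (-θ)) * (T ^ (α - β - D) * T ^ θ) := by ring
          _ = U ^ (α - θ - D) * T ^ (α - β + θ - D) := by rw [eT, eU]
      rw [e1]
      calc U ^ (α - θ - D) * T ^ (α - β + θ - D)
          ≤ U ^ (α - θ - D) * U ^ (α - β + θ - D) := by
            apply mul_le_mul_of_nonneg_left
              (Real.rpow_le_rpow_of_nonpos hU0 hTU.le (by linarith))
              (Real.rpow_nonneg hU0.le _)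
        _ = U ^ (2*α - β - 2*D) := by rw [← Real.rpow_add hU0]; congr 1; ring
        _ ≤ U ^ (2*α - β - 2*D) + T ^ (2*α - β - 2*D) := by
            have : (0:ℝ) ≤ T ^ (2*α - β - 2*D) := Real.rpow_nonneg hT0.le _
            linarith
  -- assemble
  have e2 : U ^ (α - D) * min 1 (δx/U) ^ (α/2) * min 1 (δz/U) ^ (α/2) *
      (T ^ (α - β - D) * min 1 (δy/T) ^ (α/2) * max 1 (T/δz) ^ θ)
      = (min 1 (δx/U) ^ (α/2) * min 1 (δy/T) ^ (α/2)) *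
        (min 1 (δz/U) ^ (α/2) * max 1 (T/δz) ^ θ) *
        (U ^ (α - D) * T ^ (α - β - D)) := by ring
  rw [e2]
  have hn1 : (0:ℝ) ≤ min 1 (δx/U) ^ (α/2) * min 1 (δy/T) ^ (α/2) := by
    apply mul_nonneg (Real.rpow_nonneg (min1_nonneg (by positivity)) _)
      (Real.rpow_nonneg (min1_nonneg (by positivity)) _)
  have hn2 : (0:ℝ) ≤ U ^ (α - D) * T ^ (α - β - D) :=
    mul_nonneg (Real.rpow_nonneg hU0.le _) (Real.rpow_nonneg hT0.le _)
  calc (min 1 (δx/U) ^ (α/2) * min 1 (δy/T) ^ (α/2)) *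
        (min 1 (δz/U) ^ (α/2) * max 1 (T/δz) ^ θ) * (U ^ (α - D) * T ^ (α - β - D))
      ≤ ((min 1 (δx/s) ^ (α/2) * 2 ^ (α/2)) * (min 1 (δy/s) ^ (α/2) * 2 ^ (α/2))) *
        (max 1 (T/U) ^ θ) * (U ^ (α - D) * T ^ (α - β - D)) := by
        apply mul_le_mul_of_nonneg_right _ hn2
        apply mul_le_mul _ F5 (mul_nonneg (Real.rpow_nonneg (min1_nonneg (by positivity)) _)
          (Real.rpow_nonneg (le_trans zero_le_one (le_max_left _ _)) _)) (by positivity)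
        exact mul_le_mul F2 F4 (Real.rpow_nonneg (min1_nonneg (by positivity)) _) (by positivity)
    _ = ((min 1 (δx/s) ^ (α/2) * 2 ^ (α/2)) * (min 1 (δy/s) ^ (α/2) * 2 ^ (α/2))) *
        (U ^ (α - D) * T ^ (α - β - D) * max 1 (T/U) ^ θ) := by ring
    _ ≤ ((min 1 (δx/s) ^ (α/2) * 2 ^ (α/2)) * (min 1 (δy/s) ^ (α/2) * 2 ^ (α/2))) *
        (U ^ (2*α - β - 2*D) + T ^ (2*α - β - 2*D)) := by
        apply mul_le_mul_of_nonneg_left core (by positivity)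
    _ = (2 ^ (α/2) * 2 ^ (α/2)) * (min 1 (δx/s) ^ (α/2) * min 1 (δy/s) ^ (α/2)) *
        (U ^ (2*α - β - 2*D) + T ^ (2*α - β - 2*D)) := by ring

-- ### the core estimate
set_option maxHeartbeats 2000000 in
lemma core {d : ℕ} (hd : 2 ≤ d) {α β θ : ℝ} (hβ : 0 < β) (hβα : β < α) (hα : α < 2)
    (hθ0 : 0 ≤ θ) (hθβ : θ ≤ β) (hθα : θ < α/2) :
    ∃ K > 0, ∀ (x₀ : EuclideanSpace ℝ (Fin d)) (r : ℝ), 0 < r → r ≤ 1 →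
      ∀ x ∈ Metric.ball x₀ r, ∀ y ∈ Metric.ball x₀ r, x ≠ y →
        ∫⁻ z in Metric.ball x₀ r, ENNReal.ofReal (gKer α (Metric.ball x₀ r) x z *
            (‖z - y‖ ^ (α - β - (d:ℝ)) * min 1 (deltaD (Metric.ball x₀ r) y / ‖z - y‖) ^ (α/2)
              * max 1 (‖z - y‖ / deltaD (Metric.ball x₀ r) z) ^ θ)) ∂volume
          ≤ ENNReal.ofReal (K * r ^ (α - β) * gKer α (Metric.ball x₀ r) x y) := by
  have hα0 : 0 < α := hβ.trans hβα
  have hD : (2:ℝ) ≤ (d:ℝ) := by exact_mod_cast hd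
  have hd1 : 1 ≤ d := by omega
  obtain ⟨C1, hC1, H1⟩ := lintegral_ball_rpow hd1 (p := α/2 - θ) (by linarith) (by linarith)
  obtain ⟨C2, hC2, H2⟩ := lintegral_ball_rpow hd1 (p := α - β) (by linarith) (by linarith)
  set ε : ℝ := min ((α - β)/2) (((d:ℝ) - α)/2) with hε_def
  have hε0 : 0 < ε := lt_min (by linarith) (by linarith)
  have hε1 : ε ≤ (α - β)/2 := min_le_left _ _
  have hε2 : ε ≤ ((d:ℝ) - α)/2 := min_le_right _ _
  obtain ⟨C3, hC3, H3⟩ := lintegral_compl_ball_rpow hd1 (m := α + ε - d) (by linarith)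
  set K1 : ℝ := 2 ^ ((d:ℝ) + β - α) * (3/2) ^ θ * 2 ^ (α/2) with hK1_def
  set K2 : ℝ := 2 ^ ((d:ℝ) - α) * 2 ^ (α/2) * 6 ^ (α/2) with hK2_def
  set K3 : ℝ := 2 ^ (α/2) * 2 ^ (α/2) with hK3_def
  have hK1 : 0 < K1 := by
    have := Real.rpow_pos_of_pos (show (0:ℝ) < 2 by norm_num) ((d:ℝ) + β - α)
    have := Real.rpow_pos_of_pos (show (0:ℝ) < 3/2 by norm_num) θ
    have := Real.rpow_pos_of_pos (show (0:ℝ) < 2 by norm_num) (α/2)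
    positivity
  have hK2 : 0 < K2 := by
    have := Real.rpow_pos_of_pos (show (0:ℝ) < 2 by norm_num) ((d:ℝ) - α)
    have := Real.rpow_pos_of_pos (show (0:ℝ) < 2 by norm_num) (α/2)
    have := Real.rpow_pos_of_pos (show (0:ℝ) < 6 by norm_num) (α/2)
    positivity
  have hK3 : 0 < K3 := by
    have := Real.rpow_pos_of_pos (show (0:ℝ) < 2 by norm_num) (α/2)
    positivity
  set A1 : ℝ := K1 * C1 * 2 ^ (α - β) with hA1_def
  set A2 : ℝ := K2 * C2 with hA2_def
  set A3 : ℝ := 2 * K3 * (C3 * 2 ^ ((d:ℝ) - β - ε)) with hA3_def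
  have hA1 : 0 < A1 := by
    have := Real.rpow_pos_of_pos (show (0:ℝ) < 2 by norm_num) (α - β); positivity
  have hA2 : 0 < A2 := by positivity
  have hA3 : 0 < A3 := by
    have := Real.rpow_pos_of_pos (show (0:ℝ) < 2 by norm_num) ((d:ℝ) - β - ε); positivity
  refine ⟨A1 + A2 + A3, by positivity, ?_⟩
  intro x₀ r hr hr1 x hx y hy hxy
  set B := Metric.ball x₀ r with hB_def
  set s : ℝ := ‖x - y‖ with hs_def
  have hs0 : 0 < s := by rw [hs_def, norm_sub_pos_iff]; exact hxy
  have hs2r : s < 2*r := by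
    have h1 : dist x y ≤ dist x x₀ + dist x₀ y := dist_triangle _ _ _
    have h2 : dist x x₀ < r := mem_ball.1 hx
    have h3 : dist x₀ y < r := by rw [dist_comm]; exact mem_ball.1 hy
    rw [dist_eq_norm] at h1
    rw [hs_def]; linarith
  have hδnn : ∀ w, 0 ≤ deltaD B w := fun w => Metric.infDist_nonneg
  have hLip : ∀ z w : EuclideanSpace ℝ (Fin d), deltaD B z ≤ deltaD B w + ‖z - w‖ := by
    intro z w
    rw [← dist_eq_norm]
    exact Metric.infDist_le_infDist_add_dist
  have hmx : (0:ℝ) ≤ min 1 (deltaD B x / s) ^ (α/2) :=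
    Real.rpow_nonneg (min1_nonneg (div_nonneg (hδnn x) hs0.le)) _
  have hmy : (0:ℝ) ≤ min 1 (deltaD B y / s) ^ (α/2) :=
    Real.rpow_nonneg (min1_nonneg (div_nonneg (hδnn y) hs0.le)) _
  set mx : ℝ := min 1 (deltaD B x / s) ^ (α/2) with hmx_def
  set my : ℝ := min 1 (deltaD B y / s) ^ (α/2) with hmy_def
  set X : ℝ := r ^ (α-β) * (s ^ (α - (d:ℝ)) * (mx * my)) with hX_def
  have hXnn : 0 ≤ X := by
    have h1 : (0:ℝ) ≤ r ^ (α-β) := Real.rpow_nonneg hr.le _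
    have h2 : (0:ℝ) ≤ s ^ (α - (d:ℝ)) := Real.rpow_nonneg hs0.le _
    positivity
  set f : EuclideanSpace ℝ (Fin d) → ENNReal := fun z => ENNReal.ofReal (gKer α B x z *
      (‖z - y‖ ^ (α - β - (d:ℝ)) * min 1 (deltaD B y / ‖z - y‖) ^ (α/2)
        * max 1 (‖z - y‖ / deltaD B z) ^ θ)) with hf_def
  have hmeas : ∀ (w : EuclideanSpace ℝ (Fin d)) (e : ℝ),
      Measurable fun z : EuclideanSpace ℝ (Fin d) => ENNReal.ofReal (‖z - w‖ ^ e) := by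
    intro w e
    apply ENNReal.measurable_ofReal.comp
    fun_prop
  set P1 := Metric.ball x (s/2) with hP1_def
  set P2 := Metric.ball y (s/2) with hP2_def
  set P3 := B \ (P1 ∪ P2) with hP3_def
  -- triangle facts
  have htri1 : ∀ z : EuclideanSpace ℝ (Fin d), s ≤ ‖x - z‖ + ‖z - y‖ := by
    intro z
    have := dist_triangle x z y
    rw [dist_eq_norm, dist_eq_norm, dist_eq_norm] at this
    rw [hs_def]; linarith
  have htri2 : ∀ z : EuclideanSpace ℝ (Fin d), ‖z - y‖ ≤ s + ‖x - z‖ := by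
    intro z
    have := dist_triangle z x y
    rw [dist_eq_norm, dist_eq_norm, dist_eq_norm] at this
    have h2 : ‖z - x‖ = ‖x - z‖ := norm_sub_rev _ _
    rw [hs_def]; linarith
  -- Region 1 bound
  have bound1 : ∫⁻ z in P1, f z ∂volume ≤ ENNReal.ofReal (A1 * X) := by
    set c1 : ℝ := K1 * (mx * my) * s ^ (α - β - (d:ℝ) + θ + α/2) with hc1_def
    have hc1nn : 0 ≤ c1 := by
      have h2 : (0:ℝ) ≤ s ^ (α - β - (d:ℝ) + θ + α/2) := Real.rpow_nonneg hs0.le _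
      positivity
    have step1 : ∫⁻ z in P1, f z ∂volume ≤
        ∫⁻ z in P1, ENNReal.ofReal c1 * ENNReal.ofReal (‖z - x‖ ^ ((α/2 - θ) - (d:ℝ))) ∂volume := by
      apply setLIntegral_mono (by exact (measurable_const.mul (hmeas x _)))
      intro z hz
      rw [hf_def]
      have hUs : ‖x - z‖ < s/2 := by
        have := mem_ball.1 hz
        rw [dist_eq_norm, ← norm_sub_rev] at this
        exact this
      have hzx : ‖z - x‖ = ‖x - z‖ := norm_sub_rev _ _
      rw [← ENNReal.ofReal_mul hc1nn, hzx]
      apply ENNReal.ofReal_le_ofReal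
      have hpt := pt1 (δx := deltaD B x) (δy := deltaD B y) (δz := deltaD B z)
        hα0 hα hβ hβα hD hθ0 hθα hs0 (norm_nonneg (x - z)) hUs
        (by have := htri1 z; linarith) (htri2 z)
        (hδnn x) (hδnn y) (hδnn z)
      calc gKer α B x z * (‖z - y‖ ^ (α - β - (d:ℝ)) * min 1 (deltaD B y / ‖z - y‖) ^ (α/2)
            * max 1 (‖z - y‖ / deltaD B z) ^ θ)
          ≤ (2 ^ ((d:ℝ) + β - α) * (3/2) ^ θ * 2 ^ (α/2)) * (mx * my) *
            s ^ (α - β - (d:ℝ) + θ + α/2) * ‖x - z‖ ^ (α/2 - θ - (d:ℝ)) := by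
            rw [gKer]
            exact hpt
        _ = c1 * ‖x - z‖ ^ ((α/2 - θ) - (d:ℝ)) := by rw [hc1_def, hK1_def]; try ring_nf
    have step2 : ∫⁻ z in P1, ENNReal.ofReal c1 *
        ENNReal.ofReal (‖z - x‖ ^ ((α/2 - θ) - (d:ℝ))) ∂volume ≤
        ENNReal.ofReal c1 * ENNReal.ofReal (C1 * (s/2) ^ (α/2 - θ)) := by
      rw [lintegral_const_mul' _ _ ENNReal.ofReal_ne_top]
      exact mul_le_mul_right (H1 x (s/2) (by linarith)) _
    refine step1.trans (step2.trans ?_)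
    rw [← ENNReal.ofReal_mul hc1nn]
    apply ENNReal.ofReal_le_ofReal
    -- real arithmetic
    have e1 : s ^ (α - β - (d:ℝ) + θ + α/2) * (s/2) ^ (α/2 - θ)
        = s ^ (α - (d:ℝ)) * s ^ (α - β) * 2 ^ (-(α/2 - θ)) := by
      have h0 : ((s/2:ℝ)) ^ (α/2 - θ) = s ^ (α/2 - θ) * 2 ^ (-(α/2 - θ)) :=
        div_rpow_eq hs0.le (by norm_num)
      have e0 : α - β - (d:ℝ) + θ + α/2 + (α/2 - θ) = (α - (d:ℝ)) + (α - β) := by ring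
      rw [h0, ← mul_assoc, ← Real.rpow_add hs0, e0, Real.rpow_add hs0]
    have e2 : s ^ (α - β) ≤ 2 ^ (α - β) * r ^ (α - β) := by
      calc s ^ (α - β) ≤ (2*r) ^ (α - β) :=
            Real.rpow_le_rpow hs0.le hs2r.le (by linarith)
        _ = 2 ^ (α - β) * r ^ (α - β) := Real.mul_rpow (by norm_num) hr.le
    have e3 : (2:ℝ) ^ (-(α/2 - θ)) ≤ 1 :=
      Real.rpow_le_one_of_one_le_of_nonpos (by norm_num) (by linarith)
    have h2nn : (0:ℝ) ≤ (2:ℝ) ^ (α - β) := Real.rpow_nonneg (by norm_num) _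
    have hsd : (0:ℝ) ≤ s ^ (α - (d:ℝ)) := Real.rpow_nonneg hs0.le _
    have hrr : (0:ℝ) ≤ r ^ (α - β) := Real.rpow_nonneg hr.le _
    calc c1 * (C1 * (s/2) ^ (α/2 - θ))
        = (K1 * C1) * (mx * my) * (s ^ (α - β - (d:ℝ) + θ + α/2) * (s/2) ^ (α/2 - θ)) := by
          rw [hc1_def]; ring
      _ = (K1 * C1) * (mx * my) * (s ^ (α - (d:ℝ)) * s ^ (α - β) * 2 ^ (-(α/2 - θ))) := by
          rw [e1]
      _ ≤ (K1 * C1) * (mx * my) * (s ^ (α - (d:ℝ)) * (2 ^ (α - β) * r ^ (α - β)) * 1) := by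
          apply mul_le_mul_of_nonneg_left _ (by positivity)
          apply mul_le_mul (mul_le_mul_of_nonneg_left e2 hsd) e3 (Real.rpow_nonneg (by norm_num) _)
            (by positivity)
      _ = A1 * X := by rw [hA1_def, hX_def]; ring
  -- Region 2 bound
  have bound2 : ∫⁻ z in P2, f z ∂volume ≤ ENNReal.ofReal (A2 * X) := by
    set c2 : ℝ := K2 * (mx * my) * s ^ (α - (d:ℝ)) with hc2_def
    have hc2nn : 0 ≤ c2 := by
      have h2 : (0:ℝ) ≤ s ^ (α - (d:ℝ)) := Real.rpow_nonneg hs0.le _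
      positivity
    have step1 : ∫⁻ z in P2, f z ∂volume ≤
        ∫⁻ z in P2, ENNReal.ofReal c2 * ENNReal.ofReal (‖z - y‖ ^ ((α - β) - (d:ℝ))) ∂volume := by
      apply setLIntegral_mono (by exact (measurable_const.mul (hmeas y _)))
      intro z hz
      rw [hf_def]
      have hTs : ‖z - y‖ < s/2 := by
        have := mem_ball.1 hz
        rwa [dist_eq_norm] at this
      rw [← ENNReal.ofReal_mul hc2nn]
      apply ENNReal.ofReal_le_ofReal
      have hyzn : ‖y - z‖ = ‖z - y‖ := norm_sub_rev _ _
      have hpt := pt2 (δx := deltaD B x) (δy := deltaD B y) (δz := deltaD B z)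
        (U := ‖x - z‖) hα0 hα hβ hβα hD hθ0 hθα.le hs0 (norm_nonneg _) hTs
        (by have := htri1 z; linarith)
        (hδnn x) (hδnn y) (hδnn z) (hLip z y) (by have := hLip y z; rwa [hyzn] at this)
      have heq : gKer α B x z = ‖x - z‖ ^ (α - (d:ℝ)) *
          min 1 (deltaD B x / ‖x - z‖) ^ (α/2) * min 1 (deltaD B z / ‖x - z‖) ^ (α/2) := rfl
      rw [heq]
      refine hpt.trans (le_of_eq ?_)
      rw [hc2_def, hK2_def]
      try ring
    have step2 : ∫⁻ z in P2, ENNReal.ofReal c2 *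
        ENNReal.ofReal (‖z - y‖ ^ ((α - β) - (d:ℝ))) ∂volume ≤
        ENNReal.ofReal c2 * ENNReal.ofReal (C2 * (s/2) ^ (α - β)) := by
      rw [lintegral_const_mul' _ _ ENNReal.ofReal_ne_top]
      exact mul_le_mul_right (H2 y (s/2) (by linarith)) _
    refine step1.trans (step2.trans ?_)
    rw [← ENNReal.ofReal_mul hc2nn]
    apply ENNReal.ofReal_le_ofReal
    have e2 : ((s/2:ℝ)) ^ (α - β) ≤ r ^ (α - β) :=
      Real.rpow_le_rpow (by positivity) (by linarith) (by linarith)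
    have hsd : (0:ℝ) ≤ s ^ (α - (d:ℝ)) := Real.rpow_nonneg hs0.le _
    calc c2 * (C2 * (s/2) ^ (α - β))
        = (K2 * C2) * (mx * my) * s ^ (α - (d:ℝ)) * (s/2) ^ (α - β) := by
          rw [hc2_def]; ring
      _ ≤ (K2 * C2) * (mx * my) * s ^ (α - (d:ℝ)) * r ^ (α - β) := by
          apply mul_le_mul_of_nonneg_left e2 (by positivity)
      _ = A2 * X := by rw [hA2_def, hX_def]; ring
  -- Region 3 bound
  have bound3 : ∫⁻ z in P3, f z ∂volume ≤ ENNReal.ofReal (A3 * X) := by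
    set q : ℝ := 2*α - β - 2*(d:ℝ) with hq_def
    have hK3mm : (0:ℝ) ≤ K3 * (mx * my) := by positivity
    have hfacts : ∀ z ∈ P3, s/2 ≤ ‖x - z‖ ∧ s/2 ≤ ‖z - y‖ ∧ ‖z - x‖ < 2*r ∧ ‖z - y‖ < 2*r := by
      intro z hz
      obtain ⟨hzB, hznot⟩ := hz
      rw [Set.mem_union] at hznot
      push_neg at hznot
      obtain ⟨h1, h2⟩ := hznot
      have h1' : s/2 ≤ dist z x := not_lt.1 (fun hc => h1 (mem_ball.2 hc))
      have h2' : s/2 ≤ dist z y := not_lt.1 (fun hc => h2 (mem_ball.2 hc))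
      have hzx0 : dist z x₀ < r := mem_ball.1 hzB
      have hxx0 : dist x x₀ < r := mem_ball.1 hx
      have hyx0 : dist y x₀ < r := mem_ball.1 hy
      have htzx : dist z x ≤ dist z x₀ + dist x x₀ := by
        calc dist z x ≤ dist z x₀ + dist x₀ x := dist_triangle _ _ _
          _ = dist z x₀ + dist x x₀ := by rw [dist_comm x₀ x]
      have htzy : dist z y ≤ dist z x₀ + dist y x₀ := by
        calc dist z y ≤ dist z x₀ + dist x₀ y := dist_triangle _ _ _
          _ = dist z x₀ + dist y x₀ := by rw [dist_comm x₀ y]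
      refine ⟨?_, ?_, ?_, ?_⟩
      · rw [norm_sub_rev, ← dist_eq_norm]; exact h1'
      · rw [← dist_eq_norm]; exact h2'
      · rw [← dist_eq_norm]; linarith
      · rw [← dist_eq_norm]; linarith
    have step1 : ∫⁻ z in P3, f z ∂volume ≤
        ∫⁻ z in P3, ENNReal.ofReal (K3 * (mx * my)) *
          (ENNReal.ofReal (‖z - x‖ ^ q) + ENNReal.ofReal (‖z - y‖ ^ q)) ∂volume := by
      apply setLIntegral_mono
        (by exact measurable_const.mul ((hmeas x q).add (hmeas y q)))
      intro z hz
      obtain ⟨hU, hT, hU2r, hT2r⟩ := hfacts z hz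
      rw [hf_def]
      have hpt := pt3 (δx := deltaD B x) (δy := deltaD B y) (δz := deltaD B z)
        hα0 hα hβ hβα hD hθ0 hθα.le hθβ hs0 hU hT (hδnn x) (hδnn y) (hδnn z)
      have heq : gKer α B x z = ‖x - z‖ ^ (α - (d:ℝ)) *
          min 1 (deltaD B x / ‖x - z‖) ^ (α/2) * min 1 (deltaD B z / ‖x - z‖) ^ (α/2) := rfl
      have hxzn : ‖z - x‖ = ‖x - z‖ := norm_sub_rev _ _
      have hnn1 : (0:ℝ) ≤ ‖z - x‖ ^ q := Real.rpow_nonneg (norm_nonneg _) _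
      have hnn2 : (0:ℝ) ≤ ‖z - y‖ ^ q := Real.rpow_nonneg (norm_nonneg _) _
      calc ENNReal.ofReal (gKer α B x z *
            (‖z - y‖ ^ (α - β - (d:ℝ)) * min 1 (deltaD B y / ‖z - y‖) ^ (α/2)
              * max 1 (‖z - y‖ / deltaD B z) ^ θ))
          ≤ ENNReal.ofReal ((K3 * (mx * my)) * (‖z - x‖ ^ q + ‖z - y‖ ^ q)) := by
            apply ENNReal.ofReal_le_ofReal
            rw [heq, hxzn]
            refine hpt.trans (le_of_eq ?_)
            rw [hK3_def, hq_def]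
            try ring
        _ = ENNReal.ofReal (K3 * (mx * my)) *
            (ENNReal.ofReal (‖z - x‖ ^ q) + ENNReal.ofReal (‖z - y‖ ^ q)) := by
            rw [ENNReal.ofReal_mul hK3mm, ENNReal.ofReal_add hnn1 hnn2]
    set E3 : ℝ := (2*r) ^ (α - β - ε) * (C3 * (s/2) ^ (α + ε - (d:ℝ))) with hE3_def
    have hE3nn : 0 ≤ E3 := by
      have h1 : (0:ℝ) ≤ (2*r) ^ (α - β - ε) := Real.rpow_nonneg (by positivity) _
      have h2 : (0:ℝ) ≤ (s/2) ^ (α + ε - (d:ℝ)) := Real.rpow_nonneg (by positivity) _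
      positivity
    have piece : ∀ w : EuclideanSpace ℝ (Fin d), (∀ z ∈ P3, s/2 ≤ ‖z - w‖ ∧ ‖z - w‖ < 2*r) →
        ∫⁻ z in P3, ENNReal.ofReal (‖z - w‖ ^ q) ∂volume ≤ ENNReal.ofReal E3 := by
      intro w hw
      have hconst : (0:ℝ) ≤ (2*r) ^ (α - β - ε) := Real.rpow_nonneg (by positivity) _
      have step : ∫⁻ z in P3, ENNReal.ofReal (‖z - w‖ ^ q) ∂volume ≤
          ∫⁻ z in P3, ENNReal.ofReal ((2*r) ^ (α - β - ε)) *
            ENNReal.ofReal (‖z - w‖ ^ ((α + ε - (d:ℝ)) - (d:ℝ))) ∂volume := by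
        apply setLIntegral_mono (by exact measurable_const.mul (hmeas w _))
        intro z hz
        obtain ⟨hge, hlt⟩ := hw z hz
        have ht0 : (0:ℝ) < ‖z - w‖ := by linarith
        rw [← ENNReal.ofReal_mul hconst]
        apply ENNReal.ofReal_le_ofReal
        have esplit : ‖z - w‖ ^ q = ‖z - w‖ ^ (α - β - ε) * ‖z - w‖ ^ ((α + ε - (d:ℝ)) - (d:ℝ)) := by
          rw [← Real.rpow_add ht0, hq_def]; congr 1; ring
        rw [esplit]
        apply mul_le_mul_of_nonneg_right
          (Real.rpow_le_rpow ht0.le hlt.le (by linarith)) (Real.rpow_nonneg ht0.le _)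
      refine step.trans ?_
      rw [lintegral_const_mul' _ _ ENNReal.ofReal_ne_top]
      have hsub : P3 ⊆ {z : EuclideanSpace ℝ (Fin d) | s/2 ≤ ‖z - w‖} := fun z hz => (hw z hz).1
      calc ENNReal.ofReal ((2*r) ^ (α - β - ε)) *
            ∫⁻ z in P3, ENNReal.ofReal (‖z - w‖ ^ ((α + ε - (d:ℝ)) - (d:ℝ))) ∂volume
          ≤ ENNReal.ofReal ((2*r) ^ (α - β - ε)) * ENNReal.ofReal (C3 * (s/2) ^ (α + ε - (d:ℝ))) := by
            apply mul_le_mul_right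
            exact (lintegral_mono_set hsub).trans (H3 w (s/2) (by linarith))
        _ = ENNReal.ofReal E3 := by
            rw [hE3_def, ← ENNReal.ofReal_mul hconst]
    have hfx : ∀ z ∈ P3, s/2 ≤ ‖z - x‖ ∧ ‖z - x‖ < 2*r := by
      intro z hz
      obtain ⟨h1, h2, h3, h4⟩ := hfacts z hz
      exact ⟨by rw [norm_sub_rev]; exact h1, h3⟩
    have hfy : ∀ z ∈ P3, s/2 ≤ ‖z - y‖ ∧ ‖z - y‖ < 2*r := by
      intro z hz
      obtain ⟨h1, h2, h3, h4⟩ := hfacts z hz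
      exact ⟨h2, h4⟩
    have step2 : ∫⁻ z in P3, ENNReal.ofReal (K3 * (mx * my)) *
          (ENNReal.ofReal (‖z - x‖ ^ q) + ENNReal.ofReal (‖z - y‖ ^ q)) ∂volume ≤
        ENNReal.ofReal (K3 * (mx * my)) * (ENNReal.ofReal E3 + ENNReal.ofReal E3) := by
      rw [lintegral_const_mul' _ _ ENNReal.ofReal_ne_top]
      apply mul_le_mul_right
      rw [lintegral_add_left (by exact hmeas x q)]
      exact add_le_add (piece x hfx) (piece y hfy)
    refine step1.trans (step2.trans ?_)
    rw [← ENNReal.ofReal_add hE3nn hE3nn, ← ENNReal.ofReal_mul hK3mm]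
    apply ENNReal.ofReal_le_ofReal
    -- final real arithmetic for region 3
    have hEbound : E3 ≤ C3 * 2 ^ ((d:ℝ) - β - ε) * (r ^ (α - β) * s ^ (α - (d:ℝ))) := by
      have h1 : ((2*r:ℝ)) ^ (α - β - ε) = 2 ^ (α - β - ε) * r ^ (α - β - ε) :=
        Real.mul_rpow (by norm_num) hr.le
      have h2 : ((s/2:ℝ)) ^ (α + ε - (d:ℝ)) = s ^ (α + ε - (d:ℝ)) * 2 ^ (-(α + ε - (d:ℝ))) :=
        div_rpow_eq hs0.le (by norm_num)
      have h3 : r ^ (α - β - ε) = r ^ (α - β) * r ^ (-ε) := by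
        rw [← Real.rpow_add hr]; congr 1; try ring
      have h4 : s ^ (α + ε - (d:ℝ)) = s ^ (α - (d:ℝ)) * s ^ ε := by
        rw [← Real.rpow_add hs0]; congr 1; ring
      have h5 : s ^ ε ≤ 2 ^ ε * r ^ ε := by
        calc s ^ ε ≤ (2*r) ^ ε := Real.rpow_le_rpow hs0.le hs2r.le hε0.le
          _ = 2 ^ ε * r ^ ε := Real.mul_rpow (by norm_num) hr.le
      have h6 : r ^ (-ε) * r ^ ε = 1 := by
        rw [← Real.rpow_add hr]; simp
      have h7 : (0:ℝ) ≤ s ^ (α - (d:ℝ)) := Real.rpow_nonneg hs0.le _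
      have h8 : (0:ℝ) ≤ r ^ (α - β) := Real.rpow_nonneg hr.le _
      have h9 : (0:ℝ) ≤ r ^ (-ε) := Real.rpow_nonneg hr.le _
      have h10 : (0:ℝ) ≤ (2:ℝ) ^ (α - β - ε) := Real.rpow_nonneg (by norm_num) _
      have h11 : (0:ℝ) ≤ (2:ℝ) ^ (-(α + ε - (d:ℝ))) := Real.rpow_nonneg (by norm_num) _
      calc E3 = C3 * (2 ^ (α - β - ε) * 2 ^ (-(α + ε - (d:ℝ)))) *
            (r ^ (α - β) * s ^ (α - (d:ℝ))) * (r ^ (-ε) * s ^ ε) := by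
            rw [hE3_def, h1, h2, h3, h4]; ring
        _ ≤ C3 * (2 ^ (α - β - ε) * 2 ^ (-(α + ε - (d:ℝ)))) *
            (r ^ (α - β) * s ^ (α - (d:ℝ))) * (r ^ (-ε) * (2 ^ ε * r ^ ε)) := by
            apply mul_le_mul_of_nonneg_left
              (mul_le_mul_of_nonneg_left h5 h9) (by positivity)
        _ = C3 * (2 ^ (α - β - ε) * 2 ^ (-(α + ε - (d:ℝ))) * 2 ^ ε) *
            (r ^ (α - β) * s ^ (α - (d:ℝ))) * (r ^ (-ε) * r ^ ε) := by ring
        _ = C3 * 2 ^ ((d:ℝ) - β - ε) * (r ^ (α - β) * s ^ (α - (d:ℝ))) := by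
            rw [h6, ← Real.rpow_add (by norm_num : (0:ℝ) < 2),
              ← Real.rpow_add (by norm_num : (0:ℝ) < 2), mul_one]
            congr 3
            ring
      
    calc K3 * (mx * my) * (E3 + E3)
        ≤ K3 * (mx * my) * (2 * (C3 * 2 ^ ((d:ℝ) - β - ε) * (r ^ (α - β) * s ^ (α - (d:ℝ))))) := by
          apply mul_le_mul_of_nonneg_left (by linarith) hK3mm
      _ = A3 * X := by rw [hA3_def, hX_def]; ring
  -- combine
  have cover : B ⊆ (P1 ∪ P2) ∪ P3 := by
    intro z hz
    by_cases h : z ∈ P1 ∪ P2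
    · exact Set.mem_union_left _ h
    · exact Set.mem_union_right _ ⟨hz, h⟩
  have hg : gKer α B x y = s ^ (α - (d:ℝ)) * mx * my := rfl
  calc ∫⁻ z in B, f z ∂volume ≤ ∫⁻ z in (P1 ∪ P2) ∪ P3, f z ∂volume :=
        lintegral_mono_set cover
    _ ≤ (∫⁻ z in P1, f z ∂volume + ∫⁻ z in P2, f z ∂volume) + ∫⁻ z in P3, f z ∂volume :=
        le_trans (lintegral_union_le _ _ _) (add_le_add_left (lintegral_union_le _ _ _) _)
    _ ≤ (ENNReal.ofReal (A1 * X) + ENNReal.ofReal (A2 * X)) + ENNReal.ofReal (A3 * X) :=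
        add_le_add (add_le_add bound1 bound2) bound3
    _ = ENNReal.ofReal ((A1 * X + A2 * X) + A3 * X) := by
        rw [ENNReal.ofReal_add (by positivity) (by positivity),
          ENNReal.ofReal_add (by positivity) (by positivity)]
    _ ≤ ENNReal.ofReal ((A1 + A2 + A3) * r ^ (α - β) * gKer α B x y) := by
        apply ENNReal.ofReal_le_ofReal
        rw [hg, hX_def]
        ring_nf
        exact le_refl _


lemma gKer_nonneg {d : ℕ} {α : ℝ} {D : Set (EuclideanSpace ℝ (Fin d))}
    {x y : EuclideanSpace ℝ (Fin d)} : 0 ≤ gKer α D x y := by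
  unfold gKer
  apply mul_nonneg (mul_nonneg (Real.rpow_nonneg (norm_nonneg _) _) _)
  · exact Real.rpow_nonneg (min1_nonneg (div_nonneg Metric.infDist_nonneg (norm_nonneg _))) _
  · exact Real.rpow_nonneg (min1_nonneg (div_nonneg Metric.infDist_nonneg (norm_nonneg _))) _

lemma hKer_nonneg {d : ℕ} {α β : ℝ} {D : Set (EuclideanSpace ℝ (Fin d))}
    {x y : EuclideanSpace ℝ (Fin d)} : 0 ≤ hKer α β D x y := by
  have h1 : ∀ e : ℝ, (0:ℝ) ≤ ‖x - y‖ ^ e := fun e => Real.rpow_nonneg (norm_nonneg _) _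
  have h2 : ∀ e a : ℝ, 0 ≤ a → (0:ℝ) ≤ min 1 a ^ e := fun e a ha =>
    Real.rpow_nonneg (min1_nonneg ha) _
  have h3 : ∀ e a : ℝ, (0:ℝ) ≤ max 1 a ^ e := fun e a =>
    Real.rpow_nonneg (le_trans zero_le_one (le_max_left _ _)) _
  have h4 : ∀ a : ℝ, (0:ℝ) ≤ max 1 a := fun a => le_trans zero_le_one (le_max_left _ _)
  have hdiv : (0:ℝ) ≤ deltaD D y / ‖x - y‖ :=
    div_nonneg Metric.infDist_nonneg (norm_nonneg _)
  unfold hKer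
  split_ifs
  · exact mul_nonneg (h1 _) (h2 _ _ hdiv)
  · exact mul_nonneg (mul_nonneg (h1 _) (h2 _ _ hdiv)) (h4 _)
  · exact mul_nonneg (mul_nonneg (h1 _) (h2 _ _ hdiv)) (h3 _ _)

/-- `∫_B g_B(x,z) h_B(z,y) dz ≤ c r^γ g_B(x,y)` on balls of radius `r ≤ 1`. -/
theorem integral_g_h_bound (d : ℕ) (hd : 2 ≤ d) (α β : ℝ)
    (hβ : 0 < β) (hβα : β < α) (hα : α < 2) :
    ∃ c > 0, ∀ (x₀ : EuclideanSpace ℝ (Fin d)) (r : ℝ), 0 < r → r ≤ 1 →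
      ∀ x ∈ Metric.ball x₀ r, ∀ y ∈ Metric.ball x₀ r, x ≠ y →
        (∫ z in Metric.ball x₀ r,
            gKer α (Metric.ball x₀ r) x z * hKer α β (Metric.ball x₀ r) z y)
          ≤ c * r ^ (if α = 2 * β then β / 2 else min (α - β) (α / 2)) *
              gKer α (Metric.ball x₀ r) x y := by
  have hα0 : 0 < α := hβ.trans hβα
  -- choose θ, C_h by trichotomy and reduce to `core`
  have main : ∀ (θ Ch : ℝ), 0 ≤ θ → θ ≤ β → θ < α/2 → 0 ≤ Ch →
      (∀ (x₀ : EuclideanSpace ℝ (Fin d)) (r : ℝ) (y z : EuclideanSpace ℝ (Fin d)),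
        hKer α β (Metric.ball x₀ r) z y ≤ Ch * (‖z - y‖ ^ (α - β - (d:ℝ)) *
          min 1 (deltaD (Metric.ball x₀ r) y / ‖z - y‖) ^ (α/2)
          * max 1 (‖z - y‖ / deltaD (Metric.ball x₀ r) z) ^ θ)) →
      ∃ c > 0, ∀ (x₀ : EuclideanSpace ℝ (Fin d)) (r : ℝ), 0 < r → r ≤ 1 →
      ∀ x ∈ Metric.ball x₀ r, ∀ y ∈ Metric.ball x₀ r, x ≠ y →
        (∫ z in Metric.ball x₀ r,
            gKer α (Metric.ball x₀ r) x z * hKer α β (Metric.ball x₀ r) z y)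
          ≤ c * r ^ (α - β) * gKer α (Metric.ball x₀ r) x y := by
    intro θ Ch hθ0 hθβ hθα hCh hbound
    obtain ⟨K, hK, hcore⟩ := core hd hβ hβα hα hθ0 hθβ hθα
    refine ⟨(Ch + 1) * K, by positivity, ?_⟩
    intro x₀ r hr hr1 x hx y hy hxy
    set B := Metric.ball x₀ r with hB_def
    set F : EuclideanSpace ℝ (Fin d) → ℝ := fun z => gKer α B x z * hKer α β B z y with hF_def
    have hFnn : ∀ z, 0 ≤ F z := fun z => mul_nonneg gKer_nonneg hKer_nonneg
    set C₀ : ℝ := (Ch + 1) * K * r ^ (α - β) * gKer α B x y with hC0_def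
    have hC0 : 0 ≤ C₀ := by
      have h1 : (0:ℝ) ≤ r ^ (α - β) := Real.rpow_nonneg hr.le _
      have h2 : (0:ℝ) ≤ gKer α B x y := gKer_nonneg
      positivity
    by_cases hInt : IntegrableOn F B volume
    · rw [show (∫ z in B, F z) = (∫⁻ z in B, ENNReal.ofReal (F z)).toReal from
        integral_eq_lintegral_of_nonneg_ae (Filter.Eventually.of_forall hFnn)
          hInt.aestronglyMeasurable]
      apply ENNReal.toReal_le_of_le_ofReal hC0
      have hHnn : ∀ z, 0 ≤ ‖z - y‖ ^ (α - β - (d:ℝ)) *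
          min 1 (deltaD B y / ‖z - y‖) ^ (α/2) * max 1 (‖z - y‖ / deltaD B z) ^ θ := by
        intro z
        apply mul_nonneg (mul_nonneg (Real.rpow_nonneg (norm_nonneg _) _)
          (Real.rpow_nonneg (min1_nonneg (div_nonneg Metric.infDist_nonneg (norm_nonneg _))) _))
        exact Real.rpow_nonneg (le_trans zero_le_one (le_max_left _ _)) _
      calc ∫⁻ z in B, ENNReal.ofReal (F z) ∂volume
          ≤ ∫⁻ z in B, ENNReal.ofReal (Ch + 1) * ENNReal.ofReal (gKer α B x z *
              (‖z - y‖ ^ (α - β - (d:ℝ)) * min 1 (deltaD B y / ‖z - y‖) ^ (α/2)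
                * max 1 (‖z - y‖ / deltaD B z) ^ θ)) ∂volume := by
            apply lintegral_mono
            intro z
            dsimp only
            rw [← ENNReal.ofReal_mul (by positivity)]
            apply ENNReal.ofReal_le_ofReal
            calc F z ≤ gKer α B x z * (Ch * (‖z - y‖ ^ (α - β - (d:ℝ)) *
                  min 1 (deltaD B y / ‖z - y‖) ^ (α/2)
                  * max 1 (‖z - y‖ / deltaD B z) ^ θ)) := by
                  exact mul_le_mul_of_nonneg_left (hbound x₀ r y z) gKer_nonneg
              _ = Ch * (gKer α B x z *
                  (‖z - y‖ ^ (α - β - (d:ℝ)) * min 1 (deltaD B y / ‖z - y‖) ^ (α/2)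
                  * max 1 (‖z - y‖ / deltaD B z) ^ θ)) := by ring
              _ ≤ (Ch + 1) * (gKer α B x z *
                  (‖z - y‖ ^ (α - β - (d:ℝ)) * min 1 (deltaD B y / ‖z - y‖) ^ (α/2)
                  * max 1 (‖z - y‖ / deltaD B z) ^ θ)) :=
                  mul_le_mul_of_nonneg_right (by linarith)
                    (mul_nonneg gKer_nonneg (hHnn z))
        _ = ENNReal.ofReal (Ch + 1) * ∫⁻ z in B, ENNReal.ofReal (gKer α B x z *
              (‖z - y‖ ^ (α - β - (d:ℝ)) * min 1 (deltaD B y / ‖z - y‖) ^ (α/2)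
                * max 1 (‖z - y‖ / deltaD B z) ^ θ)) ∂volume :=
            lintegral_const_mul' _ _ ENNReal.ofReal_ne_top
        _ ≤ ENNReal.ofReal (Ch + 1) * ENNReal.ofReal (K * r ^ (α - β) * gKer α B x y) :=
            mul_le_mul_right (hcore x₀ r hr hr1 x hx y hy hxy) _
        _ = ENNReal.ofReal ((Ch + 1) * (K * r ^ (α - β) * gKer α B x y)) :=
            (ENNReal.ofReal_mul (by positivity)).symm
        _ ≤ ENNReal.ofReal C₀ := by
            apply ENNReal.ofReal_le_ofReal
            rw [hC0_def]
            apply le_of_eq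
            ring
    · rw [MeasureTheory.integral_undef hInt]
      exact hC0
  have hrpow_mono : ∀ (r γ : ℝ), 0 < r → r ≤ 1 → γ ≤ α - β → r ^ (α - β) ≤ r ^ γ := by
    intro r γ hr hr1 hγ
    exact Real.rpow_le_rpow_of_exponent_ge hr hr1 hγ
  -- use `main` then weaken exponent
  have finish : ∀ (γ c : ℝ), 0 < c → γ ≤ α - β →
      (∀ (x₀ : EuclideanSpace ℝ (Fin d)) (r : ℝ), 0 < r → r ≤ 1 →
        ∀ x ∈ Metric.ball x₀ r, ∀ y ∈ Metric.ball x₀ r, x ≠ y →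
          (∫ z in Metric.ball x₀ r,
              gKer α (Metric.ball x₀ r) x z * hKer α β (Metric.ball x₀ r) z y)
            ≤ c * r ^ (α - β) * gKer α (Metric.ball x₀ r) x y) →
      ∃ c' > 0, ∀ (x₀ : EuclideanSpace ℝ (Fin d)) (r : ℝ), 0 < r → r ≤ 1 →
        ∀ x ∈ Metric.ball x₀ r, ∀ y ∈ Metric.ball x₀ r, x ≠ y →
          (∫ z in Metric.ball x₀ r,
              gKer α (Metric.ball x₀ r) x z * hKer α β (Metric.ball x₀ r) z y)
            ≤ c' * r ^ γ * gKer α (Metric.ball x₀ r) x y := by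
    intro γ c hc hγ hmain
    refine ⟨c, hc, ?_⟩
    intro x₀ r hr hr1 x hx y hy hxy
    refine (hmain x₀ r hr hr1 x hx y hy hxy).trans ?_
    apply mul_le_mul_of_nonneg_right _ gKer_nonneg
    exact mul_le_mul_of_nonneg_left (hrpow_mono r γ hr hr1 hγ) hc.le
  rcases lt_trichotomy (2*β) α with hcase | hcase | hcase
  · -- 2β < α : θ = 0
    have hne : ¬ (α = 2*β) := by intro h; rw [h] at hcase; linarith
    rw [if_neg hne]
    have hb : ∀ (x₀ : EuclideanSpace ℝ (Fin d)) (r : ℝ) (y z : EuclideanSpace ℝ (Fin d)),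
        hKer α β (Metric.ball x₀ r) z y ≤ 1 * (‖z - y‖ ^ (α - β - (d:ℝ)) *
          min 1 (deltaD (Metric.ball x₀ r) y / ‖z - y‖) ^ (α/2)
          * max 1 (‖z - y‖ / deltaD (Metric.ball x₀ r) z) ^ (0:ℝ)) := by
      intro x₀ r y z
      rw [hKer, if_pos hcase, Real.rpow_zero, mul_one, one_mul]
    obtain ⟨c, hc, hc'⟩ := main 0 1 le_rfl hβ.le (by linarith) zero_le_one hb
    exact finish _ c hc (min_le_left _ _) hc' 
  · -- α = 2β : θ = β/2
    have heq : α = 2*β := hcase.symm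
    rw [if_pos heq]
    have hb : ∀ (x₀ : EuclideanSpace ℝ (Fin d)) (r : ℝ) (y z : EuclideanSpace ℝ (Fin d)),
        hKer α β (Metric.ball x₀ r) z y ≤ 2/β * (‖z - y‖ ^ (α - β - (d:ℝ)) *
          min 1 (deltaD (Metric.ball x₀ r) y / ‖z - y‖) ^ (α/2)
          * max 1 (‖z - y‖ / deltaD (Metric.ball x₀ r) z) ^ (β/2)) := by
      intro x₀ r y z
      rw [hKer, if_neg (by linarith), if_pos heq]
      have hw : (0:ℝ) ≤ ‖z - y‖ / deltaD (Metric.ball x₀ r) z :=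
        div_nonneg (norm_nonneg _) Metric.infDist_nonneg
      have hlog := log_le_aux hw hβ (by linarith)
      have hnn : (0:ℝ) ≤ ‖z - y‖ ^ (β - (d:ℝ)) *
          min 1 (deltaD (Metric.ball x₀ r) y / ‖z - y‖) ^ β := by
        apply mul_nonneg (Real.rpow_nonneg (norm_nonneg _) _)
        exact Real.rpow_nonneg (min1_nonneg (div_nonneg Metric.infDist_nonneg (norm_nonneg _))) _
      have e1 : α - β - (d:ℝ) = β - (d:ℝ) := by linarith
      have e2 : α/2 = β := by linarith
      rw [e1, e2]
      calc ‖z - y‖ ^ (β - (d:ℝ)) * min 1 (deltaD (Metric.ball x₀ r) y / ‖z - y‖) ^ β *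
            max 1 (Real.log (‖z - y‖ / deltaD (Metric.ball x₀ r) z))
          ≤ (‖z - y‖ ^ (β - (d:ℝ)) * min 1 (deltaD (Metric.ball x₀ r) y / ‖z - y‖) ^ β) *
            ((2/β) * max 1 (‖z - y‖ / deltaD (Metric.ball x₀ r) z) ^ (β/2)) :=
            mul_le_mul_of_nonneg_left hlog hnn
        _ = 2/β * (‖z - y‖ ^ (β - (d:ℝ)) *
            min 1 (deltaD (Metric.ball x₀ r) y / ‖z - y‖) ^ β *
            max 1 (‖z - y‖ / deltaD (Metric.ball x₀ r) z) ^ (β/2)) := by ring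
    obtain ⟨c, hc, hc'⟩ := main (β/2) (2/β) (by linarith) (by linarith) (by linarith)
      (by positivity) hb
    exact finish _ c hc (by linarith : β/2 ≤ α - β) hc' 
  · -- α < 2β : θ = β - α/2
    have hne : ¬ (α = 2*β) := by intro h; rw [h] at hcase; linarith
    rw [if_neg hne]
    have hb : ∀ (x₀ : EuclideanSpace ℝ (Fin d)) (r : ℝ) (y z : EuclideanSpace ℝ (Fin d)),
        hKer α β (Metric.ball x₀ r) z y ≤ 1 * (‖z - y‖ ^ (α - β - (d:ℝ)) *
          min 1 (deltaD (Metric.ball x₀ r) y / ‖z - y‖) ^ (α/2)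
          * max 1 (‖z - y‖ / deltaD (Metric.ball x₀ r) z) ^ (β - α/2)) := by
      intro x₀ r y z
      rw [hKer, if_neg (by linarith), if_neg hne, one_mul]
    obtain ⟨c, hc, hc'⟩ := main (β - α/2) 1 (by linarith) (by linarith) (by linarith)
      zero_le_one hb
    exact finish _ c hc (min_le_left _ _) hc'
end
end

section
/- Let D ⊂ ℝ^d be a bounded open set, α ∈ (0,2), and let p : (0,∞) × D × D → [0,∞) be measurable with the semigroup property. Suppose: (a) there is c₁ > 0 with p(1/2, x, y) ≤ c₁·min(1, δ_D(x)^{α/2})·min(1, δ_D(y)^{α/2}) for all x, y ∈ D; (b) there are constants C > 0 and λ₀ > 0 with ∫_D p(s,x,y) dy ≤ C·e^{−λ₀ s} for all s > 0 and x ∈ D. Then for all t ≥ 1 and all x, y ∈ D: p(t,x,y) ≤ c₁²·C·e^{λ₀}·|D|·e^{−λ₀ t}·min(1, δ_D(x)^{α/2})·min(1, δ_D(y)^{α/2}), where |D| denotes the Lebesgue measure of D. -/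
open MeasureTheory Metric Set Filter

noncomputable section

/-- large time upper bound with rate `λ₀`. -/
theorem large_time_upper_bound (d : ℕ) (D : Set (EuclideanSpace ℝ (Fin d)))
    (hD : IsOpen D) (hDbdd : Bornology.IsBounded D) (α : ℝ) (hα0 : 0 < α) (hα2 : α < 2)
    (p : ℝ → EuclideanSpace ℝ (Fin d) → EuclideanSpace ℝ (Fin d) → ℝ)
    (hmeas : ∀ t > 0, Measurable (Function.uncurry (p t)))
    (hnonneg : ∀ t > 0, ∀ x y, 0 ≤ p t x y)
    (hint : ∀ t > 0, ∀ x ∈ D, IntegrableOn (p t x) D)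
    (hsemi : ∀ s > 0, ∀ t > 0, ∀ x ∈ D, ∀ y ∈ D,
      p (t + s) x y = ∫ z in D, p t x z * p s z y)
    (c₁ : ℝ) (hc₁ : 0 < c₁)
    (ha : ∀ x ∈ D, ∀ y ∈ D, p (1 / 2) x y ≤
      c₁ * min 1 (deltaD D x ^ (α / 2)) * min 1 (deltaD D y ^ (α / 2)))
    (C lam₀ : ℝ) (hC : 0 < C) (hlam₀ : 0 < lam₀)
    (hb : ∀ s > 0, ∀ x ∈ D, (∫ y in D, p s x y) ≤ C * Real.exp (-lam₀ * s)) :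
    ∀ t ≥ 1, ∀ x ∈ D, ∀ y ∈ D,
      p t x y ≤ c₁ ^ 2 * C * Real.exp lam₀ * (volume D).toReal * Real.exp (-lam₀ * t) *
        min 1 (deltaD D x ^ (α / 2)) * min 1 (deltaD D y ^ (α / 2)) := by
  intro t ht x hx y hy
  have hDm : MeasurableSet D := hD.measurableSet
  obtain ⟨R, hRsub⟩ := hDbdd.subset_closedBall (0 : EuclideanSpace ℝ (Fin d))
  have hvol : volume D < ⊤ :=
    lt_of_le_of_lt (measure_mono hRsub) measure_closedBall_lt_top
  have hm0 : ∀ u : EuclideanSpace ℝ (Fin d), 0 ≤ min 1 (deltaD D u ^ (α / 2)) :=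
    fun u => le_min zero_le_one (Real.rpow_nonneg Metric.infDist_nonneg _)
  have hm1 : ∀ u : EuclideanSpace ℝ (Fin d), min 1 (deltaD D u ^ (α / 2)) ≤ 1 :=
    fun u => min_le_left _ _
  have half_pos : (0:ℝ) < 1/2 := by norm_num
  -- one-sided consequences of (a)
  have ha1 : ∀ u ∈ D, ∀ v ∈ D, p (1/2) u v ≤ c₁ * min 1 (deltaD D u ^ (α / 2)) := by
    intro u hu v hv
    have h1 := ha u hu v hv
    have h2 : c₁ * min 1 (deltaD D u ^ (α / 2)) * min 1 (deltaD D v ^ (α / 2))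
        ≤ c₁ * min 1 (deltaD D u ^ (α / 2)) * 1 :=
      mul_le_mul_of_nonneg_left (hm1 v) (mul_nonneg hc₁.le (hm0 u))
    calc p (1/2) u v ≤ _ := h1
      _ ≤ c₁ * min 1 (deltaD D u ^ (α / 2)) * 1 := h2
      _ = c₁ * min 1 (deltaD D u ^ (α / 2)) := by ring
  have ha2 : ∀ u ∈ D, ∀ v ∈ D, p (1/2) u v ≤ c₁ * min 1 (deltaD D v ^ (α / 2)) := by
    intro u hu v hv
    have h1 := ha u hu v hv
    have h2 : c₁ * min 1 (deltaD D u ^ (α / 2)) * min 1 (deltaD D v ^ (α / 2))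
        ≤ c₁ * 1 * min 1 (deltaD D v ^ (α / 2)) :=
      mul_le_mul_of_nonneg_right (mul_le_mul_of_nonneg_left (hm1 u) hc₁.le) (hm0 v)
    calc p (1/2) u v ≤ _ := h1
      _ ≤ c₁ * 1 * min 1 (deltaD D v ^ (α / 2)) := h2
      _ = c₁ * min 1 (deltaD D v ^ (α / 2)) := by ring
  -- nonnegativity of the right hand side
  have hRHS0 : 0 ≤ c₁ ^ 2 * C * Real.exp lam₀ * (volume D).toReal * Real.exp (-lam₀ * t) *
      min 1 (deltaD D x ^ (α / 2)) * min 1 (deltaD D y ^ (α / 2)) :=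
    mul_nonneg (mul_nonneg (mul_nonneg (mul_nonneg (mul_nonneg (mul_nonneg (sq_nonneg c₁)
      hC.le) (Real.exp_pos _).le) ENNReal.toReal_nonneg) (Real.exp_pos _).le) (hm0 x)) (hm0 y)
  -- mass submultiplicativity step (via Tonelli)
  have step : ∀ s : ℝ, 0 < s → ∀ u : ℝ, 0 < u → ∀ z ∈ D,
      (∫ w in D, p (s + u) z w) ≤ (∫ w in D, p s z w) * (C * Real.exp (-lam₀ * u)) := by
    intro s hs u hu z hz
    have hsu : 0 < s + u := by linarith
    have hmassnn : 0 ≤ ∫ w in D, p s z w :=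
      setIntegral_nonneg hDm fun w _ => hnonneg s hs z w
    have hCe : 0 ≤ C * Real.exp (-lam₀ * u) := mul_nonneg hC.le (Real.exp_pos _).le
    have key : ENNReal.ofReal (∫ w in D, p (s + u) z w)
        ≤ ENNReal.ofReal ((∫ w in D, p s z w) * (C * Real.exp (-lam₀ * u))) := by
      rw [ofReal_integral_eq_lintegral_ofReal (hint (s+u) hsu z hz)
        (Filter.Eventually.of_forall fun w => hnonneg (s+u) hsu z w)]
      calc (∫⁻ w in D, ENNReal.ofReal (p (s+u) z w))
          ≤ ∫⁻ w in D, ∫⁻ v in D,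
              ENNReal.ofReal (p s z v) * ENNReal.ofReal (p u v w) := by
            refine lintegral_mono_ae ?_
            filter_upwards [ae_restrict_mem hDm] with w hw
            rw [hsemi u hu s hs z hz w hw]
            by_cases hI : IntegrableOn (fun v => p s z v * p u v w) D volume
            · rw [ofReal_integral_eq_lintegral_ofReal hI
                (Filter.Eventually.of_forall fun v =>
                  mul_nonneg (hnonneg s hs z v) (hnonneg u hu v w))]
              exact le_of_eq (lintegral_congr fun v => ENNReal.ofReal_mul (hnonneg s hs z v))
            · rw [integral_undef hI]
              simp
        _ = ∫⁻ v in D, ∫⁻ w in D,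
              ENNReal.ofReal (p s z v) * ENNReal.ofReal (p u v w) := by
            have hmeas1 : Measurable fun q : EuclideanSpace ℝ (Fin d) × EuclideanSpace ℝ (Fin d) =>
                ENNReal.ofReal (p s z q.2) * ENNReal.ofReal (p u q.2 q.1) := by
              apply Measurable.fun_mul
              · exact ENNReal.measurable_ofReal.comp
                  ((hmeas s hs).comp (measurable_const.prodMk measurable_snd))
              · exact ENNReal.measurable_ofReal.comp
                  ((hmeas u hu).comp (measurable_snd.prodMk measurable_fst))
            exact lintegral_lintegral_swap hmeas1.aemeasurable
        _ = ∫⁻ v in D, ENNReal.ofReal (p s z v) * ∫⁻ w in D, ENNReal.ofReal (p u v w) := by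
            exact lintegral_congr fun v => lintegral_const_mul' _ _ ENNReal.ofReal_ne_top
        _ ≤ ∫⁻ v in D, ENNReal.ofReal (p s z v) * ENNReal.ofReal (C * Real.exp (-lam₀ * u)) := by
            refine lintegral_mono_ae ?_
            filter_upwards [ae_restrict_mem hDm] with v hv
            refine mul_le_mul_right ?_ _
            rw [← ofReal_integral_eq_lintegral_ofReal (hint u hu v hv)
              (Filter.Eventually.of_forall fun w => hnonneg u hu v w)]
            exact ENNReal.ofReal_le_ofReal (hb u hu v hv)
        _ = (∫⁻ v in D, ENNReal.ofReal (p s z v)) * ENNReal.ofReal (C * Real.exp (-lam₀ * u)) :=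
            lintegral_mul_const' _ _ ENNReal.ofReal_ne_top
        _ = ENNReal.ofReal ((∫ v in D, p s z v) * (C * Real.exp (-lam₀ * u))) := by
            rw [ENNReal.ofReal_mul hmassnn,
              ofReal_integral_eq_lintegral_ofReal (hint s hs z hz)
                (Filter.Eventually.of_forall fun v => hnonneg s hs z v)]
    exact (ENNReal.ofReal_le_ofReal_iff (mul_nonneg hmassnn hCe)).1 key
  rcases lt_or_eq_of_le ht with h1 | h1
  · -- case 1 < t
    have ht1 : (0:ℝ) < t - 1 := by linarith
    have ht12 : (0:ℝ) < t - 1/2 := by linarith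
    have inner : ∀ z ∈ D, p (t - 1/2) z y ≤
        C * Real.exp (-lam₀ * (t-1)) * (c₁ * min 1 (deltaD D y ^ (α / 2))) := by
      intro z hz
      have hEq := hsemi (1/2) half_pos (t - 1) ht1 z hz y hy
      rw [show t - 1 + 1/2 = t - 1/2 by ring] at hEq
      rw [hEq]
      have hInt : Integrable (fun w => p (t-1) z w * (c₁ * min 1 (deltaD D y ^ (α / 2))))
          (volume.restrict D) := (hint (t-1) ht1 z hz).mul_const _
      have hmono := integral_mono_of_nonneg
        (Filter.Eventually.of_forall fun w =>
          mul_nonneg (hnonneg (t-1) ht1 z w) (hnonneg (1/2) half_pos w y))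
        hInt
        ((ae_restrict_iff' hDm).2 (Filter.Eventually.of_forall fun w hw =>
          mul_le_mul_of_nonneg_left (ha2 w hw y hy) (hnonneg (t-1) ht1 z w)))
      calc (∫ w in D, p (t-1) z w * p (1/2) w y)
          ≤ ∫ w in D, p (t-1) z w * (c₁ * min 1 (deltaD D y ^ (α / 2))) := hmono
        _ = (∫ w in D, p (t-1) z w) * (c₁ * min 1 (deltaD D y ^ (α / 2))) := by
            rw [integral_mul_const]
        _ ≤ (C * Real.exp (-lam₀ * (t-1))) * (c₁ * min 1 (deltaD D y ^ (α / 2))) :=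
            mul_le_mul_of_nonneg_right (hb (t-1) ht1 z hz) (mul_nonneg hc₁.le (hm0 y))
        _ = C * Real.exp (-lam₀ * (t-1)) * (c₁ * min 1 (deltaD D y ^ (α / 2))) := by ring
    have hEq := hsemi (t - 1/2) ht12 (1/2) half_pos x hx y hy
    rw [show 1/2 + (t - 1/2) = t by ring] at hEq
    rw [hEq]
    have hconst : IntegrableOn (fun _ : EuclideanSpace ℝ (Fin d) =>
        (c₁ * min 1 (deltaD D x ^ (α / 2))) *
          (C * Real.exp (-lam₀ * (t-1)) * (c₁ * min 1 (deltaD D y ^ (α / 2))))) D volume :=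
      integrableOn_const hvol.ne
    have hmono := integral_mono_of_nonneg
      (Filter.Eventually.of_forall fun z =>
        mul_nonneg (hnonneg (1/2) half_pos x z) (hnonneg (t-1/2) ht12 z y))
      hconst
      ((ae_restrict_iff' hDm).2 (Filter.Eventually.of_forall fun z hz =>
        mul_le_mul (ha1 x hx z hz) (inner z hz) (hnonneg (t-1/2) ht12 z y)
          (mul_nonneg hc₁.le (hm0 x))))
    have hexp : Real.exp (-lam₀ * (t-1)) = Real.exp lam₀ * Real.exp (-lam₀ * t) := by
      rw [← Real.exp_add]; congr 1; ring
    calc (∫ z in D, p (1/2) x z * p (t - 1/2) z y)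
        ≤ ∫ z in D, (c₁ * min 1 (deltaD D x ^ (α / 2))) *
            (C * Real.exp (-lam₀ * (t-1)) * (c₁ * min 1 (deltaD D y ^ (α / 2)))) := hmono
      _ = (volume D).toReal • ((c₁ * min 1 (deltaD D x ^ (α / 2))) *
            (C * Real.exp (-lam₀ * (t-1)) * (c₁ * min 1 (deltaD D y ^ (α / 2))))) :=
          setIntegral_const _
      _ = c₁ ^ 2 * C * Real.exp lam₀ * (volume D).toReal * Real.exp (-lam₀ * t) *
            min 1 (deltaD D x ^ (α / 2)) * min 1 (deltaD D y ^ (α / 2)) := by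
          rw [smul_eq_mul, hexp]; ring
  · -- case t = 1
    subst h1
    have hsem1 : p 1 x y = ∫ z in D, p (1/2) x z * p (1/2) z y := by
      have hEq := hsemi (1/2) half_pos (1/2) half_pos x hx y hy
      rw [show (1:ℝ)/2 + 1/2 = 1 by norm_num] at hEq
      exact hEq
    by_cases hC1 : (1:ℝ) ≤ C
    · -- C ≥ 1 : direct bound
      rw [hsem1]
      have hconst : IntegrableOn (fun _ : EuclideanSpace ℝ (Fin d) =>
          (c₁ * min 1 (deltaD D x ^ (α / 2))) * (c₁ * min 1 (deltaD D y ^ (α / 2)))) D volume :=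
        integrableOn_const hvol.ne
      have hmono := integral_mono_of_nonneg
        (Filter.Eventually.of_forall fun z =>
          mul_nonneg (hnonneg (1/2) half_pos x z) (hnonneg (1/2) half_pos z y))
        hconst
        ((ae_restrict_iff' hDm).2 (Filter.Eventually.of_forall fun z hz =>
          mul_le_mul (ha1 x hx z hz) (ha2 z hz y hy) (hnonneg (1/2) half_pos z y)
            (mul_nonneg hc₁.le (hm0 x))))
      have hexp1 : Real.exp lam₀ * Real.exp (-lam₀ * 1) = 1 := by
        rw [← Real.exp_add, show lam₀ + -lam₀ * 1 = 0 by ring, Real.exp_zero]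
      have hA : 0 ≤ c₁ ^ 2 * (volume D).toReal *
          min 1 (deltaD D x ^ (α / 2)) * min 1 (deltaD D y ^ (α / 2)) :=
        mul_nonneg (mul_nonneg (mul_nonneg (sq_nonneg c₁) ENNReal.toReal_nonneg) (hm0 x)) (hm0 y)
      calc (∫ z in D, p (1/2) x z * p (1/2) z y)
          ≤ ∫ z in D, (c₁ * min 1 (deltaD D x ^ (α / 2))) *
              (c₁ * min 1 (deltaD D y ^ (α / 2))) := hmono
        _ = (volume D).toReal • ((c₁ * min 1 (deltaD D x ^ (α / 2))) *
              (c₁ * min 1 (deltaD D y ^ (α / 2)))) := setIntegral_const _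
        _ = 1 * (c₁ ^ 2 * (volume D).toReal *
              min 1 (deltaD D x ^ (α / 2)) * min 1 (deltaD D y ^ (α / 2))) := by
            rw [smul_eq_mul]; ring
        _ ≤ C * (c₁ ^ 2 * (volume D).toReal *
              min 1 (deltaD D x ^ (α / 2)) * min 1 (deltaD D y ^ (α / 2))) :=
            mul_le_mul_of_nonneg_right hC1 hA
        _ = c₁ ^ 2 * C * Real.exp lam₀ * (volume D).toReal * Real.exp (-lam₀ * 1) *
              min 1 (deltaD D x ^ (α / 2)) * min 1 (deltaD D y ^ (α / 2)) := by
            rw [show c₁ ^ 2 * C * Real.exp lam₀ * (volume D).toReal * Real.exp (-lam₀ * 1) *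
                min 1 (deltaD D x ^ (α / 2)) * min 1 (deltaD D y ^ (α / 2)) =
                (Real.exp lam₀ * Real.exp (-lam₀ * 1)) *
                (C * (c₁ ^ 2 * (volume D).toReal *
                  min 1 (deltaD D x ^ (α / 2)) * min 1 (deltaD D y ^ (α / 2)))) from by ring,
              hexp1, one_mul]
    · -- C < 1 : the mass at time 1/2 vanishes, hence p 1 x y = 0
      push_neg at hC1
      have chain : ∀ k : ℕ, (∫ z in D, p (1/2) x z) ≤
          C ^ k * ∫ z in D, p ((1/2:ℝ) ^ (k+1)) x z := by
        intro k
        induction k with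
        | zero => norm_num
        | succ n ih =>
          have hpos : (0:ℝ) < (1/2:ℝ) ^ (n+2) := by positivity
          have hstep := step ((1/2:ℝ) ^ (n+2)) hpos ((1/2:ℝ) ^ (n+2)) hpos x hx
          rw [show ((1/2:ℝ) ^ (n+2) + (1/2:ℝ) ^ (n+2)) = (1/2:ℝ) ^ (n+1) from by ring] at hstep
          have hmassnn : 0 ≤ ∫ z in D, p ((1/2:ℝ) ^ (n+2)) x z :=
            setIntegral_nonneg hDm fun z _ => hnonneg _ hpos x z
          have hexple : Real.exp (-lam₀ * (1/2:ℝ) ^ (n+2)) ≤ 1 := by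
            rw [Real.exp_le_one_iff]
            nlinarith [hpos, hlam₀]
          have h2 : (∫ z in D, p ((1/2:ℝ) ^ (n+1)) x z) ≤
              C * ∫ z in D, p ((1/2:ℝ) ^ (n+2)) x z := by
            calc (∫ z in D, p ((1/2:ℝ) ^ (n+1)) x z)
                ≤ (∫ z in D, p ((1/2:ℝ) ^ (n+2)) x z) *
                  (C * Real.exp (-lam₀ * (1/2:ℝ) ^ (n+2))) := hstep
              _ ≤ (∫ z in D, p ((1/2:ℝ) ^ (n+2)) x z) * (C * 1) :=
                  mul_le_mul_of_nonneg_left (mul_le_mul_of_nonneg_left hexple hC.le) hmassnn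
              _ = C * ∫ z in D, p ((1/2:ℝ) ^ (n+2)) x z := by ring
          calc (∫ z in D, p (1/2) x z)
              ≤ C ^ n * ∫ z in D, p ((1/2:ℝ) ^ (n+1)) x z := ih
            _ ≤ C ^ n * (C * ∫ z in D, p ((1/2:ℝ) ^ (n+2)) x z) :=
                mul_le_mul_of_nonneg_left h2 (pow_nonneg hC.le n)
            _ = C ^ (n+1) * ∫ z in D, p ((1/2:ℝ) ^ (n+2)) x z := by ring
      have hub : ∀ k : ℕ, (∫ z in D, p (1/2) x z) ≤ C ^ (k+1) := by
        intro k
        have hpos : (0:ℝ) < (1/2:ℝ) ^ (k+1) := by positivity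
        have h1 := hb ((1/2:ℝ) ^ (k+1)) hpos x hx
        have hexple : Real.exp (-lam₀ * (1/2:ℝ) ^ (k+1)) ≤ 1 := by
          rw [Real.exp_le_one_iff]
          nlinarith [hpos, hlam₀]
        have h2 : (∫ z in D, p ((1/2:ℝ) ^ (k+1)) x z) ≤ C := by
          calc (∫ z in D, p ((1/2:ℝ) ^ (k+1)) x z)
              ≤ C * Real.exp (-lam₀ * (1/2:ℝ) ^ (k+1)) := h1
            _ ≤ C * 1 := mul_le_mul_of_nonneg_left hexple hC.le
            _ = C := mul_one C
        calc (∫ z in D, p (1/2) x z)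
            ≤ C ^ k * ∫ z in D, p ((1/2:ℝ) ^ (k+1)) x z := chain k
          _ ≤ C ^ k * C := mul_le_mul_of_nonneg_left h2 (pow_nonneg hC.le k)
          _ = C ^ (k+1) := by rw [pow_succ]
      have hlim : Tendsto (fun k : ℕ => C ^ (k+1)) atTop (nhds 0) := by
        have h0 := tendsto_pow_atTop_nhds_zero_of_lt_one hC.le hC1
        have h1 := h0.mul_const C
        simp only [zero_mul] at h1
        have : (fun k : ℕ => C ^ (k+1)) = fun k : ℕ => C ^ k * C := by
          funext k; rw [pow_succ]
        rw [this]
        exact h1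
      have hle0 : (∫ z in D, p (1/2) x z) ≤ 0 := ge_of_tendsto' hlim hub
      have hmass0 : (∫ z in D, p (1/2) x z) = 0 :=
        le_antisymm hle0 (setIntegral_nonneg hDm fun z _ => hnonneg (1/2) half_pos x z)
      have hae : (fun z => p (1/2) x z) =ᵐ[volume.restrict D] 0 :=
        (integral_eq_zero_iff_of_nonneg_ae
          (Filter.Eventually.of_forall fun z => hnonneg (1/2) half_pos x z)
          (hint (1/2) half_pos x hx)).1 hmass0
      have hzero : p 1 x y = 0 := by
        rw [hsem1]
        have hz : (fun z => p (1/2) x z * p (1/2) z y) =ᵐ[volume.restrict D]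
            (fun _ => (0:ℝ)) := by
          filter_upwards [hae] with z hz
          simp only [Pi.zero_apply] at hz
          rw [hz, zero_mul]
        rw [integral_congr_ae hz, integral_zero]
      rw [hzero]
      exact hRHS0

end
end
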